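/- arXiv:0712.1669 — 7 statements merged into one kernel-verified Lean document; each statement's English description precedes it below -/
import Mathlib

section
/- Let a ∈ L^∞(ℝ) with 0 < c₀ ≤ a ≤ c₁ a.e., χ the associated characteristic flow, and for Re(μ) > 0 define (R(μ)f)(x) = ∫_0^∞ e^{-μ z} f(χ(-z, x)) dz for f ∈ L²(ℝ). Then for every k ≥ 1, ‖R(μ)^k f‖_{L²} ≤ (c₁/c₀)^{1/2} Re(μ)^{-k} ‖f‖_{L²}. -/
/-!
With `χ t = A⁻¹ ∘ (t + ·) ∘ A`, the bounds `c₀ ≤ a ≤ c₁` make `A` bi-Lipschitz, so every `χ t`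
is `c₁/c₀`-Lipschitz with inverse `χ (-t)`, and `‖g ∘ χ t‖₂ ≤ (c₁/c₀)^{1/2} ‖g‖₂`.
Because `χ` is a flow, `(R g)(χ t x) = ∫_0^∞ e^{-μz} g(χ (t - z) x) dz`; Cauchy–Schwarz against
the weight `e^{-Re μ z}` followed by Tonelli (in place of Minkowski's integral inequality) gives
`sup_t ‖(R g) ∘ χ t‖₂ ≤ (Re μ)⁻¹ sup_t ‖g ∘ χ t‖₂`. Iterating and taking `t = 0`, the factor
`(c₁/c₀)^{1/2}` is paid only once. Since `A` maps null sets to null sets, `R f` only depends on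
the a.e. class of `f`, so `f` may be replaced by a measurable representative.
-/

open MeasureTheory intervalIntegral

open Set Filter Function ENNReal

lemma intervalIntegrable_inv_of_ae_le {a : ℝ → ℝ} {c₀ : ℝ} (hmeas : Measurable a) (hc₀ : 0 < c₀)
    (ha : ∀ᵐ x, c₀ ≤ a x) (x y : ℝ) : IntervalIntegrable (fun u ↦ (a u)⁻¹) volume x y :=
  (intervalIntegrable_const (c := c₀⁻¹)).mono_fun' hmeas.inv.aestronglyMeasurable <|
    ae_restrict_of_ae <| ha.mono fun u hu ↦ by
      change ‖(a u)⁻¹‖ ≤ c₀⁻¹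
      rw [Real.norm_eq_abs, abs_of_pos (inv_pos.2 (hc₀.trans_le hu))]
      exact inv_anti₀ hc₀ hu

lemma sub_bounds_of_eq_integral_inv {a A : ℝ → ℝ} {c₀ c₁ : ℝ} (hmeas : Measurable a)
    (hc₀ : 0 < c₀) (hbound : ∀ᵐ x, c₀ ≤ a x ∧ a x ≤ c₁)
    (hA : ∀ x, A x = ∫ y in (0 : ℝ)..x, (a y)⁻¹) {x y : ℝ} (hxy : x ≤ y) :
    c₁⁻¹ * (y - x) ≤ A y - A x ∧ A y - A x ≤ c₀⁻¹ * (y - x) := by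
  have hint := intervalIntegrable_inv_of_ae_le hmeas hc₀ (hbound.mono fun _ h ↦ h.1)
  rw [hA, hA, integral_interval_sub_left (hint 0 y) (hint 0 x)]
  constructor
  · calc c₁⁻¹ * (y - x) = ∫ _ in x..y, c₁⁻¹ := by simp [mul_comm]
      _ ≤ ∫ u in x..y, (a u)⁻¹ := integral_mono_ae hxy intervalIntegrable_const (hint x y) <|
          hbound.mono fun _ h ↦ inv_anti₀ (hc₀.trans_le h.1) h.2
  · calc ∫ u in x..y, (a u)⁻¹ ≤ ∫ _ in x..y, c₀⁻¹ :=
          integral_mono_ae hxy (hint x y) intervalIntegrable_const <|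
            hbound.mono fun _ h ↦ inv_anti₀ hc₀ h.1
      _ = c₀⁻¹ * (y - x) := by simp [mul_comm]

lemma Monotone.lipschitzWith_of_sub_le {f : ℝ → ℝ} (hf : Monotone f) {K : ℝ}
    (h : ∀ x y, x ≤ y → f y - f x ≤ K * (y - x)) : LipschitzWith K.toNNReal f := by
  refine LipschitzWith.of_le_add_mul' K fun x y ↦ ?_
  rcases le_total x y with hxy | hyx
  · have := h x y hxy
    rw [Real.dist_eq, abs_of_nonpos (sub_nonpos.2 hxy)]
    linarith [hf hxy]
  · have := h y x hyx
    rw [Real.dist_eq, abs_of_nonneg (sub_nonneg.2 hyx)]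
    linarith

lemma exists_homeomorph_of_sub_bounds {A : ℝ → ℝ} {m M : ℝ} (hm : 0 < m)
    (hlow : ∀ x y, x ≤ y → m * (y - x) ≤ A y - A x)
    (hup : ∀ x y, x ≤ y → A y - A x ≤ M * (y - x)) :
    ∃ e : ℝ ≃ₜ ℝ, ⇑e = A ∧ LipschitzWith M.toNNReal e ∧ LipschitzWith m⁻¹.toNNReal e.symm := by
  have hmono : StrictMono A := fun x y h ↦ by nlinarith [hlow x y h.le]
  have hlip := hmono.monotone.lipschitzWith_of_sub_le hup
  have htop : Tendsto A atTop atTop :=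
    tendsto_atTop_mono' _
      (eventually_ge_atTop 0 |>.mono fun y hy ↦ by simp only [id]; linarith [hlow 0 y hy])
      (tendsto_atTop_add_const_left _ (A 0) (tendsto_id.const_mul_atTop hm))
  have hbot : Tendsto A atBot atBot :=
    tendsto_atBot_mono' _
      (eventually_le_atBot 0 |>.mono fun y hy ↦ by simp only [id]; linarith [hlow y 0 hy])
      (tendsto_atBot_add_const_left _ (A 0) (tendsto_id.const_mul_atBot hm))
  let o := hmono.orderIsoOfSurjective A (hlip.continuous.surjective htop hbot)
  refine ⟨o.toHomeomorph, rfl, hlip, ?_⟩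
  refine o.symm.monotone.lipschitzWith_of_sub_le fun u v huv ↦ ?_
  have := hlow _ _ (o.symm.monotone huv)
  rw [le_inv_mul_iff₀ hm]
  simpa [o, StrictMono.orderIsoOfSurjective_self_symm_apply] using this

lemma LipschitzWith.volume_image_le {K : NNReal} {f : ℝ → ℝ} (h : LipschitzWith K f)
    (s : Set ℝ) : volume (f '' s) ≤ K * volume s := by
  simpa [hausdorffMeasure_real] using h.hausdorffMeasure_image_le zero_le_one s

lemma map_volume_le_smul_of_lipschitzWith_symm (e : ℝ ≃ₜ ℝ) {K : NNReal}
    (h : LipschitzWith K e.symm) : volume.map e ≤ (K : ℝ≥0∞) • volume := by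
  refine Measure.le_iff.2 fun s hs ↦ ?_
  rw [Measure.map_apply e.measurable hs, ← e.image_symm]
  exact h.volume_image_le s

lemma quasiMeasurePreserving_of_lipschitzWith_symm (e : ℝ ≃ₜ ℝ) {K : NNReal}
    (h : LipschitzWith K e.symm) : Measure.QuasiMeasurePreserving e volume volume :=
  ⟨e.measurable, Measure.absolutelyContinuous_of_le_smul
    (map_volume_le_smul_of_lipschitzWith_symm e h)⟩

lemma eLpNorm_comp_le_of_lipschitzWith_symm {E : Type*} [NormedAddCommGroup E]
    (e : ℝ ≃ₜ ℝ) {K : NNReal} (h : LipschitzWith K e.symm) {g : ℝ → E}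
    (hg : AEStronglyMeasurable g volume) {p : ℝ≥0∞} (hp : p ≠ ∞) :
    eLpNorm (g ∘ e) p volume ≤ (K : ℝ≥0∞) ^ (1 / p).toReal * eLpNorm g p volume := by
  have hle := map_volume_le_smul_of_lipschitzWith_symm e h
  rw [← eLpNorm_map_measure (hg.mono_ac (Measure.absolutelyContinuous_of_le_smul hle))
    e.measurable.aemeasurable, ← smul_eq_mul, ← eLpNorm_smul_measure_of_ne_top hp]
  exact eLpNorm_mono_measure g hle

lemma sq_eLpNorm_two {α E : Type*} [MeasurableSpace α] [NormedAddCommGroup E] (μ : Measure α)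
    (f : α → E) : eLpNorm f 2 μ ^ 2 = ∫⁻ x, ‖f x‖ₑ ^ 2 ∂μ := by
  simpa using eLpNorm_nnreal_pow_eq_lintegral (f := f) (μ := μ) (p := 2) two_ne_zero

lemma lintegral_mul_sq_le {β : Type*} [MeasurableSpace β] {ν : Measure β} {w g : β → ℝ≥0∞}
    (hw : AEMeasurable w ν) (hg : AEMeasurable g ν) :
    (∫⁻ z, w z * g z ∂ν) ^ 2 ≤ (∫⁻ z, w z ∂ν) * ∫⁻ z, w z * g z ^ 2 ∂ν := by
  have key := ENNReal.lintegral_mul_norm_pow_le (g := fun z ↦ w z * g z ^ 2) hw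
    (hw.mul (hg.pow_const 2)) (p := 2⁻¹) (q := 2⁻¹) (by norm_num) (by norm_num) (by norm_num)
  have hpt : ∀ z, w z ^ (2⁻¹ : ℝ) * (w z * g z ^ 2) ^ (2⁻¹ : ℝ) = w z * g z := fun z ↦ by
    rw [← ENNReal.mul_rpow_of_nonneg _ _ (by norm_num),
      show w z * (w z * g z ^ 2) = (w z * g z) ^ 2 by ring,
      ← ENNReal.rpow_two, ← ENNReal.rpow_mul]
    norm_num
  simp only [hpt] at key
  rw [← ENNReal.mul_rpow_of_nonneg _ _ (by norm_num), ENNReal.le_rpow_inv_iff two_pos] at key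
  exact_mod_cast key

lemma lintegral_sq_lintegral_mul_le {α β : Type*} [MeasurableSpace α] [MeasurableSpace β]
    {μ : Measure α} {ν : Measure β} [SFinite μ] [SFinite ν] {w : β → ℝ≥0∞} (hw : Measurable w)
    {G : β → α → ℝ≥0∞} (hG : Measurable (uncurry G)) {C : ℝ≥0∞}
    (hC : ∀ z, ∫⁻ x, G z x ^ 2 ∂μ ≤ C) :
    ∫⁻ x, (∫⁻ z, w z * G z x ∂ν) ^ 2 ∂μ ≤ (∫⁻ z, w z ∂ν) ^ 2 * C := by
  have hmeas : Measurable (uncurry fun z x ↦ w z * G z x ^ 2) :=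
    (hw.comp measurable_fst).mul (hG.pow_const 2)
  calc ∫⁻ x, (∫⁻ z, w z * G z x ∂ν) ^ 2 ∂μ
      ≤ ∫⁻ x, (∫⁻ z, w z ∂ν) * ∫⁻ z, w z * G z x ^ 2 ∂ν ∂μ :=
        lintegral_mono fun x ↦ lintegral_mul_sq_le hw.aemeasurable
          hG.of_uncurry_right.aemeasurable
    _ = (∫⁻ z, w z ∂ν) * ∫⁻ z, w z * ∫⁻ x, G z x ^ 2 ∂μ ∂ν := by
        have hint : Measurable fun x ↦ ∫⁻ z, w z * G z x ^ 2 ∂ν :=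
          (hmeas.comp measurable_swap).lintegral_prod_right'
        rw [lintegral_const_mul _ hint,
          lintegral_lintegral_swap (f := fun x z ↦ w z * G z x ^ 2)
            (hmeas.comp measurable_swap).aemeasurable]
        simp_rw [lintegral_const_mul _ (hG.of_uncurry_left.pow_const 2)]
    _ ≤ (∫⁻ z, w z ∂ν) * ∫⁻ z, w z * C ∂ν := by gcongr with z; exact hC z
    _ = (∫⁻ z, w z ∂ν) ^ 2 * C := by rw [lintegral_mul_const _ hw]; ring

lemma lintegral_Ioi_ofReal_exp_neg_mul {r : ℝ} (hr : 0 < r) :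
    ∫⁻ z in Ioi (0 : ℝ), ENNReal.ofReal (Real.exp (-r * z)) = ENNReal.ofReal r⁻¹ := by
  rw [← ofReal_integral_eq_lintegral_ofReal (exp_neg_integrableOn_Ioi 0 hr)
    (Eventually.of_forall fun _ ↦ (Real.exp_pos _).le), integral_exp_mul_Ioi (neg_lt_zero.2 hr)]
  simp

lemma eLpNorm_integral_exp_mul_le {α : Type*} [MeasurableSpace α] {ν : Measure α} [SFinite ν]
    {μ : ℂ} (hμ : 0 < μ.re) {G : ℝ → α → ℂ} (hG : Measurable (uncurry G)) {C : ℝ≥0∞}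
    (hC : ∀ z, eLpNorm (G z) 2 ν ≤ C) :
    eLpNorm (fun x ↦ ∫ z in Ioi (0 : ℝ), Complex.exp (-μ * z) * G z x) 2 ν
      ≤ ENNReal.ofReal μ.re⁻¹ * C := by
  set w : ℝ → ℝ≥0∞ := fun z ↦ ENNReal.ofReal (Real.exp (-μ.re * z))
  have hnorm : ∀ (z : ℝ) x, ‖Complex.exp (-μ * z) * G z x‖ₑ = w z * ‖G z x‖ₑ := fun z x ↦ by
    rw [enorm_mul, ← ofReal_norm, Complex.norm_exp]
    simp [w, Complex.mul_re]
  rw [← ENNReal.pow_le_pow_left_iff two_ne_zero, sq_eLpNorm_two, mul_pow,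
    ← lintegral_Ioi_ofReal_exp_neg_mul hμ]
  calc ∫⁻ x, ‖∫ z in Ioi (0 : ℝ), Complex.exp (-μ * z) * G z x‖ₑ ^ 2 ∂ν
      ≤ ∫⁻ x, (∫⁻ z in Ioi (0 : ℝ), w z * ‖G z x‖ₑ) ^ 2 ∂ν := by
        refine lintegral_mono fun x ↦ ?_
        gcongr
        exact (enorm_integral_le_lintegral_enorm _).trans_eq (lintegral_congr fun z ↦ hnorm z x)
    _ ≤ (∫⁻ z in Ioi (0 : ℝ), w z) ^ 2 * C ^ 2 :=
        lintegral_sq_lintegral_mul_le (by fun_prop) hG.enorm fun z ↦ by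
          rw [← sq_eLpNorm_two]
          gcongr
          exact hC z

-- For `e = A` this is the characteristic flow `χ t x = A⁻¹ (t + A x)`.
def Homeomorph.conjTranslationFlow (e : ℝ ≃ₜ ℝ) : Flow ℝ ℝ where
  toFun t x := e.symm (t + e x)
  cont' := by fun_prop
  map_add' t s x := by simp [add_assoc]
  map_zero' x := by simp

namespace Homeomorph

variable (e : ℝ ≃ₜ ℝ)

@[simp]
lemma conjTranslationFlow_apply (t x : ℝ) : e.conjTranslationFlow t x = e.symm (t + e x) := rfl

lemma lipschitzWith_conjTranslationFlow {K K' : NNReal} (he : LipschitzWith K e)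
    (he' : LipschitzWith K' e.symm) (t : ℝ) : LipschitzWith (K' * K) (e.conjTranslationFlow t) :=
  LipschitzWith.of_dist_le_mul fun x y ↦ by
    calc dist (e.symm (t + e x)) (e.symm (t + e y)) ≤ K' * dist (t + e x) (t + e y) :=
          he'.dist_le_mul _ _
      _ ≤ K' * (K * dist x y) := by
          rw [dist_add_left]
          gcongr
          exact he.dist_le_mul x y
      _ = ↑(K' * K) * dist x y := by push_cast; ring

lemma quasiMeasurePreserving_conjTranslationFlow_neg {K : NNReal} (he : LipschitzWith K e)
    (x : ℝ) :
    Measure.QuasiMeasurePreserving (fun z ↦ e.conjTranslationFlow (-z) x) volume volume := by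
  have : (fun z ↦ e.conjTranslationFlow (-z) x) = e.symm ∘ (fun z ↦ e x - z) := by
    funext z
    simp [neg_add_eq_sub]
  rw [this]
  exact (quasiMeasurePreserving_of_lipschitzWith_symm e.symm (by simpa using he)).comp
    (Measure.measurePreserving_sub_left volume (e x)).quasiMeasurePreserving

end Homeomorph

namespace Flow

variable (ϕ : Flow ℝ ℝ)

noncomputable def resolvent (μ : ℂ) (g : ℝ → ℂ) (x : ℝ) : ℂ :=
  ∫ z in Ioi (0 : ℝ), Complex.exp (-μ * z) * g (ϕ (-z) x)

lemma measurable_resolvent (μ : ℂ) {g : ℝ → ℂ} (hg : Measurable g) :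
    Measurable (ϕ.resolvent μ g) := by
  have hint : StronglyMeasurable fun p : ℝ × ℝ ↦ Complex.exp (-μ * p.2) * g (ϕ (-p.2) p.1) :=
    (Measurable.mul (by fun_prop)
      (hg.comp (ϕ.continuous continuous_snd.neg continuous_fst).measurable)).stronglyMeasurable
  exact (hint.integral_prod_right' (ν := volume.restrict (Ioi (0 : ℝ)))).measurable

lemma measurable_iterate_resolvent (μ : ℂ) {g : ℝ → ℂ} (hg : Measurable g) (n : ℕ) :
    Measurable ((ϕ.resolvent μ)^[n] g) :=
  Iterate.rec Measurable hg (fun _ h ↦ ϕ.measurable_resolvent μ h) n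

lemma resolvent_congr_ae
    (hϕ : ∀ x, Measure.QuasiMeasurePreserving (fun z ↦ ϕ (-z) x) volume volume)
    (μ : ℂ) {g g' : ℝ → ℂ} (h : g =ᵐ[volume] g') : ϕ.resolvent μ g = ϕ.resolvent μ g' :=
  funext fun x ↦ integral_congr_ae <| ae_restrict_of_ae <|
    ((hϕ x).ae_eq_comp h).mono fun z hz ↦ congrArg (Complex.exp (-μ * z) * ·) hz

lemma eLpNorm_comp_le {E : Type*} [NormedAddCommGroup E] {K : NNReal}
    (hK : ∀ t, LipschitzWith K (ϕ t)) {g : ℝ → E} (hg : AEStronglyMeasurable g volume)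
    {p : ℝ≥0∞} (hp : p ≠ ∞) (t : ℝ) :
    eLpNorm (g ∘ ϕ t) p volume ≤ (K : ℝ≥0∞) ^ (1 / p).toReal * eLpNorm g p volume :=
  eLpNorm_comp_le_of_lipschitzWith_symm (ϕ.toHomeomorph t) (hK (-t)) hg hp

lemma eLpNorm_resolvent_comp_le {μ : ℂ} (hμ : 0 < μ.re) {g : ℝ → ℂ} (hg : Measurable g)
    {C : ℝ≥0∞} (hC : ∀ s, eLpNorm (g ∘ ϕ s) 2 volume ≤ C) (t : ℝ) :
    eLpNorm (ϕ.resolvent μ g ∘ ϕ t) 2 volume ≤ ENNReal.ofReal μ.re⁻¹ * C := by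
  have : ϕ.resolvent μ g ∘ ϕ t
      = fun x ↦ ∫ z in Ioi (0 : ℝ), Complex.exp (-μ * z) * g (ϕ (t - z) x) := by
    funext x
    simp [resolvent, ← ϕ.map_add, sub_eq_neg_add]
  rw [this]
  exact eLpNorm_integral_exp_mul_le (G := fun z x ↦ g (ϕ (t - z) x)) hμ
    (hg.comp (ϕ.continuous (continuous_const.sub continuous_fst) continuous_snd).measurable)
    fun z ↦ hC (t - z)

lemma eLpNorm_iterate_resolvent_comp_le {μ : ℂ} (hμ : 0 < μ.re) {g : ℝ → ℂ} (hg : Measurable g)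
    {C : ℝ≥0∞} (hC : ∀ s, eLpNorm (g ∘ ϕ s) 2 volume ≤ C) (n : ℕ) (t : ℝ) :
    eLpNorm ((ϕ.resolvent μ)^[n] g ∘ ϕ t) 2 volume ≤ ENNReal.ofReal μ.re⁻¹ ^ n * C := by
  induction n generalizing t with
  | zero => simpa using hC t
  | succ n ih =>
    rw [iterate_succ_apply', pow_succ', mul_assoc]
    exact ϕ.eLpNorm_resolvent_comp_le hμ (ϕ.measurable_iterate_resolvent μ hg n) ih t

lemma eLpNorm_iterate_succ_resolvent_le {K : NNReal} (hK : ∀ t, LipschitzWith K (ϕ t))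
    (hϕ : ∀ x, Measure.QuasiMeasurePreserving (fun z ↦ ϕ (-z) x) volume volume)
    {μ : ℂ} (hμ : 0 < μ.re) {f : ℝ → ℂ} (hf : AEStronglyMeasurable f volume) (n : ℕ) :
    eLpNorm ((ϕ.resolvent μ)^[n + 1] f) 2 volume
      ≤ ENNReal.ofReal μ.re⁻¹ ^ (n + 1) * ((K : ℝ≥0∞) ^ (1 / 2 : ℝ) * eLpNorm f 2 volume) := by
  have hiter : (ϕ.resolvent μ)^[n + 1] f = (ϕ.resolvent μ)^[n + 1] (hf.mk f) := by
    rw [iterate_succ_apply, iterate_succ_apply, ϕ.resolvent_congr_ae hϕ μ hf.ae_eq_mk]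
  have hest := ϕ.eLpNorm_iterate_resolvent_comp_le hμ hf.measurable_mk
    (fun s ↦ ϕ.eLpNorm_comp_le hK hf.stronglyMeasurable_mk.aestronglyMeasurable ofNat_ne_top s)
    (n + 1) 0
  rw [ϕ.map_zero, comp_id, ← eLpNorm_congr_ae hf.ae_eq_mk, ← hiter,
    show (1 / 2 : ℝ≥0∞).toReal = 1 / 2 by norm_num] at hest
  exact hest

end Flow

/-- Resolvent estimate: with `χ` the characteristic flow of a coefficient `a` with
`0 < c₀ ≤ a ≤ c₁` a.e. and `(R(μ)f)(x) = ∫_0^∞ e^{-μz} f(χ(-z,x)) dz` for `Re μ > 0`,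
one has `‖R(μ)^k f‖_{L²} ≤ (c₁/c₀)^{1/2} (Re μ)^{-k} ‖f‖_{L²}` for every `k ≥ 1`. -/
theorem stmt_9 (a : ℝ → ℝ) (hmeas : Measurable a)
    (c₀ c₁ : ℝ) (hc₀ : 0 < c₀)
    (hbound : ∀ᵐ x : ℝ, c₀ ≤ a x ∧ a x ≤ c₁)
    (A : ℝ → ℝ) (hA : ∀ x : ℝ, A x = ∫ y in (0:ℝ)..x, (a y)⁻¹)
    (χ : ℝ → ℝ → ℝ) (hχ : ∀ t x : ℝ, χ t x = Function.invFun A (t + A x))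
    (μ : ℂ) (hμ : 0 < μ.re)
    (R : (ℝ → ℂ) → (ℝ → ℂ))
    (hR : ∀ (f : ℝ → ℂ) (x : ℝ),
      R f x = ∫ z in Set.Ioi (0:ℝ), Complex.exp (-μ * z) * f (χ (-z) x)) :
    ∀ (f : ℝ → ℂ), MemLp f 2 (volume : Measure ℝ) →
      ∀ k : ℕ, 1 ≤ k →
        eLpNorm (R^[k] f) 2 (volume : Measure ℝ)
          ≤ ENNReal.ofReal (Real.sqrt (c₁ / c₀) / μ.re ^ k)
              * eLpNorm f 2 (volume : Measure ℝ) := by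
  obtain ⟨x₀, hx₀⟩ := hbound.exists
  have hc₁ : 0 < c₁ := hc₀.trans_le (hx₀.1.trans hx₀.2)
  have hAsub := fun x y (hxy : x ≤ y) ↦ sub_bounds_of_eq_integral_inv hmeas hc₀ hbound hA hxy
  obtain ⟨e, rfl, he, he'⟩ := exists_homeomorph_of_sub_bounds (inv_pos.2 hc₁)
    (fun x y h ↦ (hAsub x y h).1) (fun x y h ↦ (hAsub x y h).2)
  obtain rfl : χ = e.conjTranslationFlow := funext₂ fun t x ↦ by
    rw [hχ]
    exact e.injective (by simp [Function.rightInverse_invFun e.surjective _])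
  obtain rfl : R = e.conjTranslationFlow.resolvent μ := funext₂ hR
  intro f hf k hk
  obtain ⟨n, rfl⟩ := Nat.exists_eq_add_of_le' hk
  have hsqrt : ((c₁⁻¹⁻¹.toNNReal * c₀⁻¹.toNNReal : NNReal) : ℝ≥0∞) ^ (1 / 2 : ℝ)
      = ENNReal.ofReal √(c₁ / c₀) := by
    rw [inv_inv, ← Real.toNNReal_mul hc₁.le, ← div_eq_mul_inv, Real.sqrt_eq_rpow,
      ← ENNReal.ofReal_rpow_of_nonneg (by positivity) (by norm_num)]
    rfl
  refine (e.conjTranslationFlow.eLpNorm_iterate_succ_resolvent_le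
    (e.lipschitzWith_conjTranslationFlow he he')
    (e.quasiMeasurePreserving_conjTranslationFlow_neg he) hμ hf.1 n).trans_eq ?_
  rw [hsqrt, ← mul_assoc, ← ENNReal.ofReal_pow (inv_nonneg.2 hμ.le),
    ← ENNReal.ofReal_mul (by positivity), inv_pow, mul_comm _ √_, ← div_eq_mul_inv]
end

section
/- Let a(x) = -sign(x), χ_F its Filippov flow as above, and u₀ the constant function 1 on ℝ. Then for every test function φ ∈ C_c^∞((0,∞) × ℝ), ∫_0^∞ ∫_ℝ φ(t, χ_F(t,x)) dx dt = ∫_0^∞ ∫_ℝ φ(t,z) dz dt + 2 ∫_0^∞ t φ(t,0) dt. That is, the Poupaud–Rascle measure solution of ∂_t u + ∂_x(a u) = 0 with u(0) = 1 equals the distribution 1 + 2t δ(x). -/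
open MeasureTheory Set Topology

-- auxiliary: closed embedding z ↦ (t, z)
lemma aux_ce_right (t : ℝ) : IsClosedEmbedding (fun z : ℝ => (t, z)) := by
  refine IsClosedEmbedding.of_continuous_injective_isClosedMap
    (by fun_prop) (fun a b h => (Prod.mk.injEq _ _ _ _).mp h |>.2) ?_
  intro s hs
  have : (fun z : ℝ => (t, z)) '' s = {t} ×ˢ s := by
    ext p; simp [Set.mem_image, Prod.ext_iff, eq_comm, and_comm]
  rw [this]
  exact (isClosed_singleton).prod hs

lemma aux_ce_left (y : ℝ) : IsClosedEmbedding (fun t : ℝ => (t, y)) := by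
  refine IsClosedEmbedding.of_continuous_injective_isClosedMap
    (by fun_prop) (fun a b h => (Prod.mk.injEq _ _ _ _).mp h |>.1) ?_
  intro s hs
  have : (fun t : ℝ => (t, y)) '' s = s ×ˢ {y} := by
    ext p; simp [Set.mem_image, Prod.ext_iff, eq_comm, and_comm]
  rw [this]
  exact hs.prod isClosed_singleton

lemma inner_eq (χF : ℝ → ℝ → ℝ)
    (hχ : ∀ t x : ℝ, χF t x =
      if x < 0 then -(max (-(t + x)) 0) else if 0 < x then max (x - t) 0 else 0)
    (ψ : ℝ → ℝ) (hψc : Continuous ψ) (hψs : HasCompactSupport ψ)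
    {t : ℝ} (ht : 0 < t) :
    ∫ x : ℝ, ψ (χF t x) = (∫ z : ℝ, ψ z) + 2 * t * ψ 0 := by
  have hψint : Integrable ψ := hψc.integrable_of_hasCompactSupport hψs
  -- piecewise decomposition
  have hdecomp : (fun x => ψ (χF t x)) =
      (fun x => indicator (Iio (-t)) (fun x => ψ (x + t)) x
        + indicator (Icc (-t) t) (fun _ => ψ 0) x
        + indicator (Ioi t) (fun x => ψ (x - t)) x) := by
    funext x
    rw [hχ]
    rcases lt_trichotomy x 0 with hx | hx | hx
    · simp only [if_pos hx]
      rcases lt_or_ge x (-t) with h | h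
      · have h1 : x ∈ Iio (-t) := h
        have h2 : x ∉ Icc (-t) t := by simp [h.not_ge]
        have h3 : x ∉ Ioi t := by simp; linarith
        have : -(t + x) ≥ 0 := by linarith
        rw [indicator_of_mem h1, indicator_of_notMem h2, indicator_of_notMem h3]
        rw [max_eq_left this]
        ring_nf
      · have h1 : x ∉ Iio (-t) := by simp [h]
        have h2 : x ∈ Icc (-t) t := ⟨h, by linarith⟩
        have h3 : x ∉ Ioi t := by simp; linarith
        rw [indicator_of_notMem h1, indicator_of_mem h2, indicator_of_notMem h3]
        have : -(t + x) ≤ 0 := by linarith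
        rw [max_eq_right this]
        ring_nf
    · subst hx
      have h1 : (0:ℝ) ∉ Iio (-t) := by simp; linarith
      have h2 : (0:ℝ) ∈ Icc (-t) t := ⟨by linarith, le_of_lt ht⟩
      have h3 : (0:ℝ) ∉ Ioi t := by simp [ht.le]
      rw [indicator_of_notMem h1, indicator_of_mem h2, indicator_of_notMem h3]
      simp
    · simp only [if_neg (not_lt.mpr hx.le), if_pos hx]
      have h1 : x ∉ Iio (-t) := by simp; linarith
      rcases le_or_gt x t with h | h
      · have h2 : x ∈ Icc (-t) t := ⟨by linarith, h⟩
        have h3 : x ∉ Ioi t := by simp [h]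
        rw [indicator_of_notMem h1, indicator_of_mem h2, indicator_of_notMem h3]
        rw [max_eq_right (by linarith)]
        ring_nf
      · have h2 : x ∉ Icc (-t) t := fun hm => absurd hm.2 h.not_ge
        have h3 : x ∈ Ioi t := h
        rw [indicator_of_notMem h1, indicator_of_notMem h2, indicator_of_mem h3]
        rw [max_eq_left (by linarith)]
        ring_nf
  have i1 : Integrable (indicator (Iio (-t)) (fun x => ψ (x + t))) :=
    (integrable_indicator_iff measurableSet_Iio).mpr (hψint.comp_add_right t).integrableOn
  have i2 : Integrable (indicator (Icc (-t) t) (fun _ : ℝ => ψ 0)) :=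
    (integrable_indicator_iff measurableSet_Icc).mpr (integrableOn_const measure_Icc_lt_top.ne)
  have i3 : Integrable (indicator (Ioi t) (fun x => ψ (x - t))) := by
    have : Integrable (fun x : ℝ => ψ (x - t)) := by
      simpa [sub_eq_add_neg] using hψint.comp_add_right (-t)
    exact (integrable_indicator_iff measurableSet_Ioi).mpr this.integrableOn
  have i12 : Integrable (fun x => indicator (Iio (-t)) (fun x => ψ (x + t)) x
      + indicator (Icc (-t) t) (fun _ : ℝ => ψ 0) x) := i1.add i2
  rw [hdecomp, integral_add i12 i3, integral_add i1 i2]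
  have e1 : ∫ x, indicator (Iio (-t)) (fun x => ψ (x + t)) x = ∫ z in Iio 0, ψ z := by
    have : (indicator (Iio (-t)) (fun x => ψ (x + t)))
        = fun x => indicator (Iio 0) ψ (x + t) := by
      funext x
      by_cases h : x < -t
      · rw [indicator_of_mem (by exact h : x ∈ Iio (-t)),
          indicator_of_mem (by simp; linarith : x + t ∈ Iio 0)]
      · rw [indicator_of_notMem (by simpa using h),
          indicator_of_notMem (by simp at h ⊢; linarith)]
    rw [this, integral_add_right_eq_self (indicator (Iio 0) ψ) t, integral_indicator measurableSet_Iio]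
  have e3 : ∫ x, indicator (Ioi t) (fun x => ψ (x - t)) x = ∫ z in Ioi 0, ψ z := by
    have : (indicator (Ioi t) (fun x => ψ (x - t)))
        = fun x => indicator (Ioi 0) ψ (x + -t) := by
      funext x
      by_cases h : t < x
      · rw [indicator_of_mem (by exact h : x ∈ Ioi t),
          indicator_of_mem (by simp; linarith : x + -t ∈ Ioi 0)]
        ring_nf
      · rw [indicator_of_notMem (by simpa using h),
          indicator_of_notMem (by simp at h ⊢; linarith)]
    rw [this, integral_add_right_eq_self (indicator (Ioi 0) ψ) (-t),
      integral_indicator measurableSet_Ioi]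
  have e2 : ∫ x, indicator (Icc (-t) t) (fun _ : ℝ => ψ 0) x = 2 * t * ψ 0 := by
    rw [integral_indicator measurableSet_Icc, setIntegral_const, Real.volume_real_Icc_of_le (by linarith)]
    rw [smul_eq_mul]
    ring
  rw [e1, e2, e3]
  have : ∫ z in Iio 0, ψ z = ∫ z in Iic 0, ψ z :=
    setIntegral_congr_set Iio_ae_eq_Iic
  rw [this, add_right_comm,
    intervalIntegral.integral_Iic_add_Ioi (hψint.integrableOn) (hψint.integrableOn)]

/-- For `a(x) = -sign(x)` with Filippov flow `χ_F` and initial datum `u₀ = 1`, the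
Poupaud–Rascle measure solution of `∂_t u + ∂_x(a u) = 0` is `1 + 2t δ(x)`: for every
test function `φ ∈ C_c^∞((0,∞) × ℝ)`,
`∫_0^∞ ∫_ℝ φ(t, χ_F(t,x)) dx dt = ∫_0^∞ ∫_ℝ φ(t,z) dz dt + 2 ∫_0^∞ t φ(t,0) dt`. -/
theorem stmt_11 (χF : ℝ → ℝ → ℝ)
    (hχ : ∀ t x : ℝ, χF t x =
      if x < 0 then -(max (-(t + x)) 0) else if 0 < x then max (x - t) 0 else 0) :
    ∀ φ : ℝ × ℝ → ℝ, ContDiff ℝ (⊤ : ℕ∞) φ → HasCompactSupport φ →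
      (Function.support φ ⊆ Set.Ioi 0 ×ˢ Set.univ) →
      ∫ t in Set.Ioi (0:ℝ), ∫ x : ℝ, φ (t, χF t x)
        = (∫ t in Set.Ioi (0:ℝ), ∫ z : ℝ, φ (t, z))
          + 2 * ∫ t in Set.Ioi (0:ℝ), t * φ (t, 0) := by
  intro φ hφ hφc _
  have hφcont : Continuous φ := hφ.continuous
  have hφint : Integrable φ := hφcont.integrable_of_hasCompactSupport hφc
  -- integrability of the pieces
  have hf : Integrable (fun t => ∫ z : ℝ, φ (t, z)) := by
    have h2 : Integrable φ ((volume : Measure ℝ).prod (volume : Measure ℝ)) := by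
      rw [← Measure.volume_eq_prod]; exact hφint
    exact h2.integral_prod_left
  have hg : Integrable (fun t => t * φ (t, 0)) := by
    have hc : Continuous (fun t : ℝ => t * φ (t, 0)) := by fun_prop
    have hs : HasCompactSupport (fun t : ℝ => φ (t, 0)) :=
      hφc.comp_isClosedEmbedding (aux_ce_left 0)
    have hs' : HasCompactSupport (fun t : ℝ => t * φ (t, 0)) := by
      apply HasCompactSupport.intro hs.isCompact
      intro t ht
      have h0 := image_eq_zero_of_notMem_tsupport (f := fun t : ℝ => φ (t, 0)) ht
      beta_reduce at h0
      simp [h0]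
    exact hc.integrable_of_hasCompactSupport hs'
  have key : ∀ t ∈ Ioi (0:ℝ),
      (∫ x : ℝ, φ (t, χF t x)) = (∫ z : ℝ, φ (t, z)) + 2 * (t * φ (t, 0)) := by
    intro t ht
    have := inner_eq χF hχ (fun z => φ (t, z)) (by fun_prop)
      (hφc.comp_isClosedEmbedding (aux_ce_right t)) ht
    rw [this]; ring
  rw [setIntegral_congr_fun measurableSet_Ioi key,
    integral_add hf.integrableOn ((hg.integrableOn).const_mul 2),
    integral_const_mul]
end

section
/- Let a(t,x) = 2·H(-x) where H is the Heaviside function, and χ_F(t,x) = -max(-(x+2t),0)·1_{x<0} + x·1_{x≥0} the associated Filippov flow (χ_F(t,0)=0). Then for every φ ∈ C_c^∞((0,∞) × ℝ): ∫_0^∞ ∫_ℝ φ(t, χ_F(t,x)) dx dt = ∫_0^∞ (∫_{-∞}^{-2t} φ(t, x+2t) dx + 2t·φ(t,0) + ∫_0^∞ φ(t,x) dx) dt = ∫_0^∞ ∫_ℝ φ(t,z) dz dt + 2∫_0^∞ t φ(t,0) dt, i.e., the Poupaud–Rascle solution with initial data 1 is 1 + 2t δ(x). -/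
open MeasureTheory Set

lemma slice_cs2 {φ : ℝ × ℝ → ℝ} (h : HasCompactSupport φ) (t : ℝ) :
    HasCompactSupport (fun x => φ (t, x)) := by
  apply IsCompact.of_isClosed_subset (h.image continuous_snd) isClosed_closure
  apply closure_minimal ?_ (h.image continuous_snd).isClosed
  intro x hx
  exact ⟨(t, x), subset_tsupport _ hx, rfl⟩

lemma slice_cs1 {φ : ℝ × ℝ → ℝ} (h : HasCompactSupport φ) :
    HasCompactSupport (fun t => φ (t, 0)) := by
  apply IsCompact.of_isClosed_subset (h.image continuous_fst) isClosed_closure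
  apply closure_minimal ?_ (h.image continuous_fst).isClosed
  intro x hx
  exact ⟨(x, 0), subset_tsupport _ hx, rfl⟩

/-- For `a(t,x) = 2H(-x)` with Filippov flow `χ_F(t,x) = -max(-(x+2t),0)` for `x < 0`
and `χ_F(t,x) = x` for `x ≥ 0`, the Poupaud–Rascle solution with initial datum `1` is
`1 + 2t δ(x)`: for every test function `φ ∈ C_c^∞((0,∞) × ℝ)`,
`∫_0^∞∫_ℝ φ(t,χ_F(t,x)) dx dt = ∫_0^∞ (∫_{-∞}^{-2t} φ(t,x+2t) dx + 2t φ(t,0)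
+ ∫_0^∞ φ(t,x) dx) dt = ∫_0^∞∫_ℝ φ(t,z) dz dt + 2∫_0^∞ t φ(t,0) dt`. -/
theorem stmt_12 (χF : ℝ → ℝ → ℝ)
    (hχ : ∀ t x : ℝ, χF t x = if x < 0 then -(max (-(x + 2*t)) 0) else x) :
    ∀ φ : ℝ × ℝ → ℝ, ContDiff ℝ (⊤ : ℕ∞) φ → HasCompactSupport φ →
      (Function.support φ ⊆ Set.Ioi 0 ×ˢ Set.univ) →
      (∫ t in Set.Ioi (0:ℝ), ∫ x : ℝ, φ (t, χF t x)
        = ∫ t in Set.Ioi (0:ℝ),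
            ((∫ x in Set.Iio (-2*t), φ (t, x + 2*t)) + 2*t * φ (t, 0)
              + ∫ x in Set.Ioi (0:ℝ), φ (t, x))) ∧
      (∫ t in Set.Ioi (0:ℝ), ∫ x : ℝ, φ (t, χF t x)
        = (∫ t in Set.Ioi (0:ℝ), ∫ z : ℝ, φ (t, z))
          + 2 * ∫ t in Set.Ioi (0:ℝ), t * φ (t, 0)) := by
  intro φ hsm hcs hsupp
  have hc : Continuous φ := hsm.continuous
  have hslc : ∀ t : ℝ, Continuous (fun x : ℝ => φ (t, x)) := fun t =>
    hc.comp (continuous_const.prodMk continuous_id)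
  have hsli : ∀ t : ℝ, Integrable (fun x : ℝ => φ (t, x)) :=
    fun t => (hslc t).integrable_of_hasCompactSupport (slice_cs2 hcs t)
  have htri : ∀ t : ℝ, Integrable (fun x : ℝ => φ (t, x + 2*t)) :=
    fun t => (hsli t).comp_add_right (2*t)
  -- Step 1: inner integral computation for t > 0
  have step1 : ∀ t : ℝ, 0 < t →
      (∫ x : ℝ, φ (t, χF t x))
        = (∫ x in Iio (-2*t), φ (t, x + 2*t)) + 2*t * φ (t, 0)
            + ∫ x in Ioi (0:ℝ), φ (t, x) := by
    intro t ht
    have hfeq : ∀ x : ℝ, φ (t, χF t x)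
        = (Iio (-2*t)).indicator (fun x => φ (t, x + 2*t)) x
          + (Ico (-2*t) 0).indicator (fun _ => φ (t, 0)) x
          + (Ici (0:ℝ)).indicator (fun x => φ (t, x)) x := by
      intro x
      rw [Set.indicator_apply, Set.indicator_apply, Set.indicator_apply]
      simp only [mem_Iio, mem_Ico, mem_Ici]
      rcases lt_or_ge x (-2*t) with h1 | h1
      · have hχv : χF t x = x + 2*t := by
          rw [hχ, if_pos (by nlinarith), max_eq_left (by nlinarith)]
          ring
        rw [hχv, if_pos h1, if_neg (by push_neg; intro h; exact absurd h1 (not_lt.2 h)),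
          if_neg (by nlinarith)]
        ring
      · rcases lt_or_ge x 0 with h2 | h2
        · have hχv : χF t x = 0 := by
            rw [hχ, if_pos h2, max_eq_right (by nlinarith)]
            ring
          rw [hχv, if_neg (not_lt.2 h1), if_pos ⟨h1, h2⟩, if_neg (not_le.2 h2)]
          ring
        · have hχv : χF t x = x := by rw [hχ, if_neg (not_lt.2 h2)]
          rw [hχv, if_neg (not_lt.2 h1), if_neg (by push_neg; exact fun _ => h2),
            if_pos h2]
          ring
    have i1 : Integrable ((Iio (-2*t)).indicator (fun x => φ (t, x + 2*t))) :=
      (htri t).indicator measurableSet_Iio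
    have i2 : Integrable ((Ico (-2*t) (0:ℝ)).indicator (fun _ : ℝ => φ (t, 0))) := by
      rw [integrable_indicator_iff measurableSet_Ico]
      exact integrableOn_const measure_Ico_lt_top.ne enorm_ne_top
    have i3 : Integrable ((Ici (0:ℝ)).indicator (fun x => φ (t, x))) :=
      (hsli t).indicator measurableSet_Ici
    have hvol : ((volume (Ico (-2*t) (0:ℝ))).toReal) = 2*t := by
      rw [Real.volume_Ico, ENNReal.toReal_ofReal (by nlinarith)]
      ring
    calc ∫ x : ℝ, φ (t, χF t x)
        = ∫ x : ℝ, ((Iio (-2*t)).indicator (fun x => φ (t, x + 2*t)) x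
            + (Ico (-2*t) 0).indicator (fun _ => φ (t, 0)) x
            + (Ici (0:ℝ)).indicator (fun x => φ (t, x)) x) :=
          integral_congr_ae (Filter.Eventually.of_forall hfeq)
      _ = (∫ x in Iio (-2*t), φ (t, x + 2*t)) + 2*t * φ (t, 0)
            + ∫ x in Ioi (0:ℝ), φ (t, x) := by
          have e1 := integral_add (i1.add i2) i3
          simp only [Pi.add_apply] at e1
          rw [e1, integral_add i1 i2,
            integral_indicator measurableSet_Iio, integral_indicator measurableSet_Ico,
            integral_indicator measurableSet_Ici, setIntegral_const, smul_eq_mul, measureReal_def, hvol,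
            integral_Ici_eq_integral_Ioi]
  -- Step 2: the RHS simplifies
  have step2 : ∀ t : ℝ, 0 < t →
      (∫ x in Iio (-2*t), φ (t, x + 2*t)) + 2*t * φ (t, 0)
          + ∫ x in Ioi (0:ℝ), φ (t, x)
        = (∫ z : ℝ, φ (t, z)) + 2 * (t * φ (t, 0)) := by
    intro t ht
    have htrans : (∫ x in Iio (-2*t), φ (t, x + 2*t)) = ∫ z in Iio (0:ℝ), φ (t, z) := by
      have hpt : ∀ x : ℝ, (Iio (-2*t)).indicator (fun x => φ (t, x + 2*t)) x
          = (Iio (0:ℝ)).indicator (fun z => φ (t, z)) (x + 2*t) := by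
        intro x
        simp only [Set.indicator_apply, mem_Iio]
        by_cases h : x < -2*t
        · rw [if_pos h, if_pos (by linarith)]
        · rw [if_neg h, if_neg (by intro hh; apply h; linarith)]
      calc (∫ x in Iio (-2*t), φ (t, x + 2*t))
          = ∫ x : ℝ, (Iio (0:ℝ)).indicator (fun z => φ (t, z)) (x + 2*t) := by
            rw [← integral_indicator measurableSet_Iio]
            exact integral_congr_ae (Filter.Eventually.of_forall hpt)
        _ = ∫ x : ℝ, (Iio (0:ℝ)).indicator (fun z => φ (t, z)) x :=
            integral_add_right_eq_self _ (2*t)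
        _ = ∫ z in Iio (0:ℝ), φ (t, z) := integral_indicator measurableSet_Iio
    have hsplit : (∫ z in Iio (0:ℝ), φ (t, z)) + ∫ z in Ioi (0:ℝ), φ (t, z)
        = ∫ z : ℝ, φ (t, z) := by
      rw [← integral_Iic_eq_integral_Iio]
      exact intervalIntegral.integral_Iic_add_Ioi (hsli t).integrableOn (hsli t).integrableOn
    rw [htrans]
    linarith [hsplit]
  constructor
  · exact setIntegral_congr_fun measurableSet_Ioi (fun t ht => step1 t ht)
  · have hint : Integrable φ (volume : Measure (ℝ × ℝ)) :=
      hc.integrable_of_hasCompactSupport hcs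
    have hI : Integrable (fun t : ℝ => ∫ z : ℝ, φ (t, z)) := by
      rw [Measure.volume_eq_prod] at hint
      exact hint.integral_prod_left
    have hJ : Integrable (fun t : ℝ => t * φ (t, 0)) := by
      apply Continuous.integrable_of_hasCompactSupport
      · exact continuous_id.mul (hc.comp (continuous_id.prodMk continuous_const))
      · exact (slice_cs1 hcs).mul_left
    calc ∫ t in Ioi (0:ℝ), ∫ x : ℝ, φ (t, χF t x)
        = ∫ t in Ioi (0:ℝ), ((∫ z : ℝ, φ (t, z)) + 2 * (t * φ (t, 0))) := by
          apply setIntegral_congr_fun measurableSet_Ioi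
          intro t ht
          dsimp only
          rw [step1 t ht, step2 t ht]
      _ = (∫ t in Ioi (0:ℝ), ∫ z : ℝ, φ (t, z))
            + 2 * ∫ t in Ioi (0:ℝ), t * φ (t, 0) := by
          rw [integral_add hI.integrableOn ((hJ.integrableOn).const_mul 2),
            integral_const_mul]
end

section
/- Let c₂ < c₁, α ∈ [c₂,c₁], and a(t,x) = c₁ for x < αt, a(t,0 resp. αt) = α, a(t,x) = c₂ for x > αt. With u₀ = 1, the distribution u = 1 + t(c₁-c₂) δ(x - αt) satisfies ∂_t u + ∂_x(a ⋄ u) = 0 in 𝒟'((0,T) × ℝ), where a ⋄ u = c₁ H(αt - x) + c₂ H(x - αt) + α t (c₁ - c₂) δ(x - αt) is the Bouchut–James product pairing the Borel representative a with the measure u slice-wise. -/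
open MeasureTheory Set

private lemma slice_hcs_fst {f : ℝ × ℝ → ℝ} (hf : HasCompactSupport f) (g : ℝ → ℝ) :
    HasCompactSupport (fun t => f (t, g t)) := by
  have hK : IsCompact (Prod.fst '' tsupport f) := (IsCompact.image hf continuous_fst)
  apply IsCompact.of_isClosed_subset hK isClosed_closure
  refine closure_minimal ?_ hK.isClosed
  intro t ht
  exact ⟨(t, g t), subset_closure ht, rfl⟩

private lemma slice_hcs_snd {f : ℝ × ℝ → ℝ} (hf : HasCompactSupport f) (t : ℝ) :
    HasCompactSupport (fun x => f (t, x)) := by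
  have hK : IsCompact (Prod.snd '' tsupport f) := (IsCompact.image hf continuous_snd)
  apply IsCompact.of_isClosed_subset hK isClosed_closure
  refine closure_minimal ?_ hK.isClosed
  intro x hx
  exact ⟨(t, x), subset_closure hx, rfl⟩

/-- Bouchut–James solution for a jump coefficient: with `c₂ < c₁`, `α ∈ [c₂,c₁]`,
`a(t,x) = c₁` for `x < αt`, `= α` on `x = αt`, `= c₂` for `x > αt`, the distribution
`u = 1 + t(c₁-c₂)δ(x-αt)` satisfies `∂_t u + ∂_x(a ⋄ u) = 0` in `𝒟'((0,T)×ℝ)`, where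
`a ⋄ u = c₁H(αt-x) + c₂H(x-αt) + αt(c₁-c₂)δ(x-αt)` is the Bouchut–James product.
The equation is expressed against test functions `φ`:
`⟨u, ∂_t φ⟩ + ⟨a ⋄ u, ∂_x φ⟩ = 0`. -/
theorem stmt_13 (T c₁ c₂ α : ℝ) (hT : 0 < T) (hc : c₂ < c₁)
    (hα : α ∈ Set.Icc c₂ c₁)
    (a : ℝ → ℝ → ℝ)
    (ha : ∀ t x : ℝ, a t x = if x < α * t then c₁ else if x = α * t then α else c₂) :
    ∀ φ : ℝ × ℝ → ℝ, ContDiff ℝ (⊤ : ℕ∞) φ → HasCompactSupport φ →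
      (Function.support φ ⊆ Set.Ioo 0 T ×ˢ Set.univ) →
      ((∫ t : ℝ, ∫ x : ℝ, fderiv ℝ φ (t, x) (1, 0))
        + (∫ t : ℝ, t * (c₁ - c₂) * fderiv ℝ φ (t, α * t) (1, 0)))
      + ((∫ t : ℝ, ∫ x : ℝ, a t x * fderiv ℝ φ (t, x) (0, 1))
        + (∫ t : ℝ, α * t * (c₁ - c₂) * fderiv ℝ φ (t, α * t) (0, 1))) = 0 := by
  intro φ hφ hφc _hsupp
  have hφ1 : ContDiff ℝ 1 φ := hφ.of_le (by simp)
  have hd : Differentiable ℝ φ := hφ1.differentiable one_ne_zero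
  have hfc : Continuous (fderiv ℝ φ) := hφ.continuous_fderiv (by simp)
  have hcont : ∀ v : ℝ × ℝ, Continuous (fun p : ℝ × ℝ => fderiv ℝ φ p v) := fun v =>
    hfc.clm_apply continuous_const
  have hcsv : ∀ v : ℝ × ℝ, HasCompactSupport (fun p : ℝ × ℝ => fderiv ℝ φ p v) := fun v =>
    hφc.fderiv_apply ℝ v
  have hintv : ∀ v, Integrable (fun p : ℝ × ℝ => fderiv ℝ φ p v) := fun v =>
    (hcont v).integrable_of_hasCompactSupport (hcsv v)
  -- slice derivative facts
  have hder1 : ∀ x t : ℝ, HasDerivAt (fun s => φ (s, x)) (fderiv ℝ φ (t, x) (1, 0)) t := by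
    intro x t
    exact (hd (t, x)).hasFDerivAt.comp_hasDerivAt t
      ((hasDerivAt_id t).prodMk (hasDerivAt_const t x))
  have hder2 : ∀ t x : ℝ, HasDerivAt (fun y => φ (t, y)) (fderiv ℝ φ (t, x) (0, 1)) x := by
    intro t x
    exact (hd (t, x)).hasFDerivAt.comp_hasDerivAt x
      ((hasDerivAt_const x t).prodMk (hasDerivAt_id x))
  have hder3 : ∀ t : ℝ, HasDerivAt (fun s => φ (s, α * s))
      (fderiv ℝ φ (t, α * t) (1, α)) t := by
    intro t
    have hl : HasDerivAt (fun s : ℝ => α * s) α t := by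
      simpa using (hasDerivAt_id t).const_mul α
    exact (hd (t, α * t)).hasFDerivAt.comp_hasDerivAt t ((hasDerivAt_id t).prodMk hl)
  have hlin : ∀ p : ℝ × ℝ, fderiv ℝ φ p (1, α)
      = fderiv ℝ φ p (1, 0) + α * fderiv ℝ φ p (0, 1) := by
    intro p
    have h : ((1 : ℝ), α) = ((1 : ℝ), (0 : ℝ)) + α • ((0 : ℝ), (1 : ℝ)) := by
      simp [Prod.ext_iff]
    rw [h, map_add, ContinuousLinearMap.map_smul, smul_eq_mul]
  -- Part A : the first double integral vanishes
  have hA : (∫ t : ℝ, ∫ x : ℝ, fderiv ℝ φ (t, x) (1, 0)) = 0 := by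
    rw [MeasureTheory.integral_integral_swap (by
      rw [← Measure.volume_eq_prod]; exact hintv (1, 0))]
    have hz : ∀ x : ℝ, (∫ t : ℝ, fderiv ℝ φ (t, x) (1, 0)) = 0 := by
      intro x
      apply integral_eq_zero_of_hasDerivAt_of_integrable (fun t => hder1 x t)
      · exact ((hcont (1, 0)).comp (continuous_id.prodMk continuous_const)
          ).integrable_of_hasCompactSupport (slice_hcs_fst (hcsv (1, 0)) (fun _ => x))
      · exact (hφ.continuous.comp (continuous_id.prodMk continuous_const)
          ).integrable_of_hasCompactSupport (slice_hcs_fst hφc (fun _ => x))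
    simp [hz]
  -- Part C : inner integral of the product term
  have hC : ∀ t : ℝ, (∫ x : ℝ, a t x * fderiv ℝ φ (t, x) (0, 1))
      = (c₁ - c₂) * φ (t, α * t) := by
    intro t
    have hgc : ContDiff ℝ 1 (fun x => φ (t, x)) :=
      hφ1.comp (contDiff_const.prodMk contDiff_id)
    have hgcs : HasCompactSupport (fun x => φ (t, x)) := slice_hcs_snd hφc t
    have hintD : Integrable (fun x => fderiv ℝ φ (t, x) (0, 1)) :=
      ((hcont (0, 1)).comp (continuous_const.prodMk continuous_id)
        ).integrable_of_hasCompactSupport (slice_hcs_snd (hcsv (0, 1)) t)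
    have hintg : Integrable (fun x => φ (t, x)) :=
      (hφ.continuous.comp (continuous_const.prodMk continuous_id)
        ).integrable_of_hasCompactSupport hgcs
    have hgder : deriv (fun x => φ (t, x)) = fun x => fderiv ℝ φ (t, x) (0, 1) :=
      funext fun x => (hder2 t x).deriv
    have h1 : (∫ x in Iic (α * t), fderiv ℝ φ (t, x) (0, 1)) = φ (t, α * t) := by
      rw [← hgder]
      exact hgcs.integral_Iic_deriv_eq hgc (α * t)
    have h0 : (∫ x : ℝ, fderiv ℝ φ (t, x) (0, 1)) = 0 :=
      integral_eq_zero_of_hasDerivAt_of_integrable (fun x => hder2 t x) hintD hintg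
    have hae : (fun x => a t x * fderiv ℝ φ (t, x) (0, 1))
        =ᵐ[volume] (fun x => (c₁ - c₂) *
            (Iic (α * t)).indicator (fun x => fderiv ℝ φ (t, x) (0, 1)) x
          + c₂ * fderiv ℝ φ (t, x) (0, 1)) := by
      filter_upwards [compl_mem_ae_iff.2 (Real.volume_singleton (a := α * t))] with x hx
      have hx' : x ≠ α * t := hx
      rw [ha]
      rcases lt_or_gt_of_ne hx' with h | h
      · rw [if_pos h, indicator_of_mem (mem_Iic.2 h.le)]
        ring
      · rw [if_neg (not_lt.2 h.le), if_neg hx',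
          indicator_of_notMem (by simpa using h)]
        ring
    rw [integral_congr_ae hae, integral_add
        (((hintD.indicator measurableSet_Iic).const_mul (c₁ - c₂)))
        (hintD.const_mul c₂),
      integral_const_mul, integral_const_mul, integral_indicator measurableSet_Iic,
      h1, h0, mul_zero, add_zero]
  -- combine the line integrals
  have hF₀c : Continuous (fun t : ℝ => φ (t, α * t)) :=
    hφ.continuous.comp (continuous_id.prodMk (continuous_const.mul continuous_id))
  have hF₀s : HasCompactSupport (fun t : ℝ => φ (t, α * t)) :=
    slice_hcs_fst hφc (fun t => α * t)
  have hF₁c : Continuous (fun t : ℝ => fderiv ℝ φ (t, α * t) (1, 0)) :=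
    (hcont (1, 0)).comp (continuous_id.prodMk (continuous_const.mul continuous_id))
  have hF₁s : HasCompactSupport (fun t : ℝ => fderiv ℝ φ (t, α * t) (1, 0)) :=
    slice_hcs_fst (hcsv (1, 0)) (fun t => α * t)
  have hF₂c : Continuous (fun t : ℝ => fderiv ℝ φ (t, α * t) (0, 1)) :=
    (hcont (0, 1)).comp (continuous_id.prodMk (continuous_const.mul continuous_id))
  have hF₂s : HasCompactSupport (fun t : ℝ => fderiv ℝ φ (t, α * t) (0, 1)) :=
    slice_hcs_fst (hcsv (0, 1)) (fun t => α * t)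
  have hintC : Integrable (fun t : ℝ => (c₁ - c₂) * φ (t, α * t)) :=
    (hF₀c.integrable_of_hasCompactSupport hF₀s).const_mul (c₁ - c₂)
  have hintB : Integrable (fun t : ℝ => t * (c₁ - c₂) * fderiv ℝ φ (t, α * t) (1, 0)) :=
    ((continuous_id.mul continuous_const).mul hF₁c).integrable_of_hasCompactSupport
      (hF₁s.mul_left)
  have hintD2 : Integrable (fun t : ℝ => α * t * (c₁ - c₂) * fderiv ℝ φ (t, α * t) (0, 1)) :=
    (((continuous_const.mul continuous_id).mul continuous_const).mul hF₂c
      ).integrable_of_hasCompactSupport (hF₂s.mul_left)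
  -- h(t) = t * φ(t, αt) has integral of derivative zero
  have hh : ∀ t : ℝ, HasDerivAt (fun s : ℝ => s * φ (s, α * s))
      (φ (t, α * t) + t * (fderiv ℝ φ (t, α * t) (1, 0)
        + α * fderiv ℝ φ (t, α * t) (0, 1))) t := by
    intro t
    have := (hasDerivAt_id t).fun_mul (hder3 t)
    rw [hlin (t, α * t)] at this
    simpa [id] using this
  have hinth' : Integrable (fun t : ℝ => φ (t, α * t)
      + t * (fderiv ℝ φ (t, α * t) (1, 0) + α * fderiv ℝ φ (t, α * t) (0, 1))) := by
    apply (hF₀c.integrable_of_hasCompactSupport hF₀s).add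
    exact ((continuous_id.mul (hF₁c.add (continuous_const.mul hF₂c)))
      ).integrable_of_hasCompactSupport ((hF₁s.add hF₂s.mul_left).mul_left)
  have hinth : Integrable (fun t : ℝ => t * φ (t, α * t)) :=
    (continuous_id.mul hF₀c).integrable_of_hasCompactSupport hF₀s.mul_left
  have hzero : (∫ t : ℝ, (φ (t, α * t) + t * (fderiv ℝ φ (t, α * t) (1, 0)
      + α * fderiv ℝ φ (t, α * t) (0, 1)))) = 0 :=
    integral_eq_zero_of_hasDerivAt_of_integrable hh hinth' hinth
  -- final assembly
  rw [hA, zero_add]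
  have hCeq : (∫ t : ℝ, ∫ x : ℝ, a t x * fderiv ℝ φ (t, x) (0, 1))
      = ∫ t : ℝ, (c₁ - c₂) * φ (t, α * t) :=
    integral_congr_ae (Filter.Eventually.of_forall hC)
  rw [hCeq]
  have e1 : (∫ t : ℝ, ((c₁ - c₂) * φ (t, α * t)
        + α * t * (c₁ - c₂) * fderiv ℝ φ (t, α * t) (0, 1)))
      = (∫ t : ℝ, (c₁ - c₂) * φ (t, α * t))
        + ∫ t : ℝ, α * t * (c₁ - c₂) * fderiv ℝ φ (t, α * t) (0, 1) :=
    integral_add hintC hintD2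
  have e2 : (∫ t : ℝ, (t * (c₁ - c₂) * fderiv ℝ φ (t, α * t) (1, 0)
        + ((c₁ - c₂) * φ (t, α * t)
          + α * t * (c₁ - c₂) * fderiv ℝ φ (t, α * t) (0, 1))))
      = (∫ t : ℝ, t * (c₁ - c₂) * fderiv ℝ φ (t, α * t) (1, 0))
        + ∫ t : ℝ, ((c₁ - c₂) * φ (t, α * t)
          + α * t * (c₁ - c₂) * fderiv ℝ φ (t, α * t) (0, 1)) :=
    integral_add hintB (hintC.add hintD2)
  rw [← e1, ← e2]
  have hfun : ∀ t : ℝ, t * (c₁ - c₂) * fderiv ℝ φ (t, α * t) (1, 0)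
      + ((c₁ - c₂) * φ (t, α * t) + α * t * (c₁ - c₂) * fderiv ℝ φ (t, α * t) (0, 1))
      = (c₁ - c₂) * (φ (t, α * t) + t * (fderiv ℝ φ (t, α * t) (1, 0)
        + α * fderiv ℝ φ (t, α * t) (0, 1))) := by
    intro t; ring
  rw [integral_congr_ae (Filter.Eventually.of_forall hfun), integral_const_mul, hzero, mul_zero]
end

section
/- (Energy estimate) Let u ∈ AC([0,T]; L²(ℝⁿ)) be such that Qu(t) := Σ_k a_k(t,·)∂_{x_k}u(t,·) + c(t,·)u(t,·) ∈ L¹([0,T]; L²), and suppose the Gårding-type inequality Re⟨Qu(τ), u(τ)⟩_{L²} ≥ -h(τ)‖u(τ)‖_{L²}² holds a.e. with 0 ≤ h ∈ L¹([0,T]). Then for all t ∈ [0,T]: sup_{r∈[0,t]} ‖u(r)‖_{L²} ≤ exp(∫_0^t h(σ)dσ) (‖u(0)‖_{L²} + 2∫_0^t ‖(∂_t u + Qu)(r)‖_{L²} dr). -/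
/-!
Put `H r = ∫₀ʳ h` and `v r = e^{-H r} ‖u r‖`. The function `u` is absolutely continuous with
`u' = f - Qu` a.e., hence so is `e^{-2H} ‖u‖² = v²`, whose derivative
`e^{-2H} (2 Re⟪f - Qu, u⟫ - 2 h ‖u‖²)` is at most `2 ‖f‖ v` by the Gårding inequality and
`H ≥ 0`. The fundamental theorem of calculus for absolutely continuous functions then gives
`v s ^ 2 ≤ ‖u 0‖² + 2 ∫₀ˢ ‖f‖ v`. At a maximum point of `v` on `[0, t]`, with value `M`, this reads
`M² ≤ ‖u 0‖² + 2 M ∫₀ᵗ ‖f‖`, so `M ≤ ‖u 0‖ + 2 ∫₀ᵗ ‖f‖`, and finally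
`‖u r‖ = e^{H r} v r ≤ e^{H t} M`.
-/

open MeasureTheory Set Filter intervalIntegral

namespace AbsolutelyContinuousOnInterval

variable {X Y : Type*} [PseudoMetricSpace X] [PseudoMetricSpace Y] {a b : ℝ}

theorem of_dist_le_mul {f : ℝ → X} {g : ℝ → Y} {K : ℝ}
    (hg : AbsolutelyContinuousOnInterval g a b)
    (hfg : ∀ x ∈ uIcc a b, ∀ y ∈ uIcc a b, dist (f x) (f y) ≤ K * dist (g x) (g y)) :
    AbsolutelyContinuousOnInterval f a b := by
  have hK : Tendsto (fun E : ℕ × (ℕ → ℝ × ℝ) ↦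
      K * ∑ i ∈ Finset.range E.1, dist (g (E.2 i).1) (g (E.2 i).2))
      (totalLengthFilter ⊓ 𝓟 (disjWithin a b)) (nhds 0) := by
    simpa using Tendsto.const_mul K hg
  refine squeeze_zero' (.of_forall fun _ ↦ Finset.sum_nonneg fun _ _ ↦ dist_nonneg) ?_ hK
  refine eventually_inf_principal.mpr (.of_forall fun E hE ↦ ?_)
  rw [Finset.mul_sum]
  exact Finset.sum_le_sum fun i hi ↦ hfg _ (hE.1 i hi).1 _ (hE.1 i hi).2

theorem _root_.LipschitzOnWith.comp_absolutelyContinuousOnInterval {φ : X → Y} {K : NNReal}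
    {s : Set X} {f : ℝ → X} (hφ : LipschitzOnWith K φ s)
    (hf : AbsolutelyContinuousOnInterval f a b) (hfs : MapsTo f (uIcc a b) s) :
    AbsolutelyContinuousOnInterval (φ ∘ f) a b :=
  hf.of_dist_le_mul fun _ hx _ hy ↦ hφ.dist_le_mul _ (hfs hx) _ (hfs hy)

theorem norm {F : Type*} [SeminormedAddCommGroup F] {f : ℝ → F}
    (hf : AbsolutelyContinuousOnInterval f a b) :
    AbsolutelyContinuousOnInterval (fun x ↦ ‖f x‖) a b :=
  hf.of_dist_le_mul (K := 1) fun x _ y _ ↦ by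
    simpa [dist_eq_norm] using abs_norm_sub_norm_le (f x) (f y)

theorem exp {f : ℝ → ℝ} (hf : AbsolutelyContinuousOnInterval f a b) :
    AbsolutelyContinuousOnInterval (fun x ↦ Real.exp (f x)) a b := by
  obtain ⟨C, hC⟩ := hf.exists_bound
  obtain ⟨K, hK⟩ := (Real.contDiff_exp.contDiffOn (s := Icc (-C) C)).exists_lipschitzOnWith
    one_ne_zero (convex_Icc _ _) isCompact_Icc
  exact hK.comp_absolutelyContinuousOnInterval hf fun x hx ↦ abs_le.mp (hC x hx)

end AbsolutelyContinuousOnInterval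

section Primitive

variable {E : Type*} [NormedAddCommGroup E] [NormedSpace ℝ E]

theorem IntervalIntegrable.absolutelyContinuousOnInterval_intervalIntegral'
    {f : ℝ → E} {a b c : ℝ} (h : IntervalIntegrable f volume a b) (hc : c ∈ uIcc a b) :
    AbsolutelyContinuousOnInterval (fun x ↦ ∫ v in c..x, f v) a b := by
  refine (h.norm.absolutelyContinuousOnInterval_intervalIntegral hc).of_dist_le_mul (K := 1)
    fun x hx y hy ↦ ?_
  have hint {z : ℝ} (hz : z ∈ uIcc a b) : IntervalIntegrable f volume c z :=
    h.mono_set (uIcc_subset_uIcc hc hz)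
  rw [one_mul, dist_eq_norm, dist_eq_norm, integral_interval_sub_left (hint hx) (hint hy),
    integral_interval_sub_left (hint hx).norm (hint hy).norm, Real.norm_eq_abs]
  exact norm_integral_le_abs_integral_norm

theorem absolutelyContinuousOnInterval_exp_neg_integral_mul_norm {u g : ℝ → E} {h : ℝ → ℝ}
    {s : ℝ} (hu : ∀ x, u x = u 0 + ∫ t in (0:ℝ)..x, g t) (hg : IntervalIntegrable g volume 0 s)
    (hh : IntervalIntegrable h volume 0 s) :
    AbsolutelyContinuousOnInterval (fun x ↦ Real.exp (-∫ t in (0:ℝ)..x, h t) * ‖u x‖) 0 s := by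
  have hU : AbsolutelyContinuousOnInterval u 0 s :=
    (hg.absolutelyContinuousOnInterval_intervalIntegral' left_mem_uIcc).of_dist_le_mul (K := 1)
      fun x _ y _ ↦ by rw [hu x, hu y, dist_add_left, one_mul]
  exact (hh.absolutelyContinuousOnInterval_intervalIntegral left_mem_uIcc).neg.exp.fun_mul hU.norm

end Primitive

theorem le_add_two_mul_integral_of_sq_le {v k : ℝ → ℝ} {a t : ℝ} (ha : 0 ≤ a)
    (hv : ContinuousOn v (Icc 0 t)) (hk : IntervalIntegrable k volume 0 t) (hk0 : ∀ τ, 0 ≤ k τ)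
    (hvk : ∀ s ∈ Icc 0 t, v s ^ 2 ≤ a ^ 2 + 2 * ∫ τ in (0:ℝ)..s, k τ * v τ) :
    ∀ s ∈ Icc 0 t, v s ≤ a + 2 * ∫ τ in (0:ℝ)..t, k τ := by
  intro s hs
  obtain ⟨r, hr, hmax⟩ := isCompact_Icc.exists_isMaxOn ⟨s, hs⟩ hv
  have hK : 0 ≤ ∫ τ in (0:ℝ)..t, k τ := integral_nonneg (hs.1.trans hs.2) fun τ _ ↦ hk0 τ
  have hsr : v s ≤ v r := hmax hs
  rcases le_or_gt (v r) 0 with hM | hM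
  · linarith
  have hkr : IntervalIntegrable k volume 0 r :=
    hk.mono_set (uIcc_subset_uIcc_left (Icc_subset_uIcc hr))
  have hvr : ContinuousOn v (uIcc 0 r) := by
    rw [uIcc_of_le hr.1]
    exact hv.mono (Icc_subset_Icc_right hr.2)
  have hint : ∫ τ in (0:ℝ)..r, k τ * v τ ≤ v r * ∫ τ in (0:ℝ)..t, k τ :=
    calc ∫ τ in (0:ℝ)..r, k τ * v τ ≤ ∫ τ in (0:ℝ)..r, k τ * v r :=
          integral_mono_on hr.1 (hkr.mul_continuousOn hvr) (hkr.mul_const _)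
            fun τ hτ ↦ mul_le_mul_of_nonneg_left (hmax ⟨hτ.1, hτ.2.trans hr.2⟩) (hk0 τ)
      _ ≤ ∫ τ in (0:ℝ)..t, k τ * v r :=
          integral_mono_interval le_rfl hr.1 hr.2
            (.of_forall fun τ ↦ mul_nonneg (hk0 τ) hM.le) (hk.mul_const _)
      _ = v r * ∫ τ in (0:ℝ)..t, k τ := by rw [intervalIntegral.integral_mul_const, mul_comm]
  nlinarith [hvk r hr]

section Energy

variable {F : Type*} [NormedAddCommGroup F] [InnerProductSpace ℝ F] [CompleteSpace F]

theorem exp_neg_two_mul_integral_mul_norm_sq_le {u g : ℝ → F} {h k : ℝ → ℝ} {s : ℝ}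
    (hs : 0 ≤ s) (hu : ∀ x, u x = u 0 + ∫ t in (0:ℝ)..x, g t)
    (hg : IntervalIntegrable g volume 0 s) (hh : IntervalIntegrable h volume 0 s)
    (hk : IntervalIntegrable k volume 0 s) (hh0 : ∀ t, 0 ≤ h t) (hk0 : ∀ t, 0 ≤ k t)
    (hgu : ∀ᵐ τ ∂volume.restrict (Icc 0 s),
      inner ℝ (g τ) (u τ) ≤ k τ * ‖u τ‖ + h τ * ‖u τ‖ ^ 2) :
    Real.exp (-2 * ∫ t in (0:ℝ)..s, h t) * ‖u s‖ ^ 2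
      ≤ ‖u 0‖ ^ 2 + 2 * ∫ τ in (0:ℝ)..s, k τ * (Real.exp (-∫ t in (0:ℝ)..τ, h t) * ‖u τ‖) := by
  set H : ℝ → ℝ := fun x ↦ ∫ t in (0:ℝ)..x, h t
  have h0 : (0:ℝ) ∈ uIcc 0 s := left_mem_uIcc
  have hv : AbsolutelyContinuousOnInterval (fun x ↦ Real.exp (-H x) * ‖u x‖) 0 s :=
    absolutelyContinuousOnInterval_exp_neg_integral_mul_norm hu hg hh
  have hw : AbsolutelyContinuousOnInterval (fun x ↦ Real.exp (-2 * H x) * ‖u x‖ ^ 2) 0 s := by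
    convert hv.fun_mul hv using 2 with x
    rw [show -2 * H x = -H x + -H x by ring, Real.exp_add]
    ring
  have hderiv : ∀ᵐ x ∂volume.restrict (Icc 0 s),
      deriv (fun x ↦ Real.exp (-2 * H x) * ‖u x‖ ^ 2) x
        ≤ 2 * (k x * (Real.exp (-H x) * ‖u x‖)) := by
    rw [← uIcc_of_le hs] at hgu ⊢
    filter_upwards [ae_restrict_of_ae hg.ae_hasDerivAt_integral,
      ae_restrict_of_ae hh.ae_hasDerivAt_integral, ae_restrict_mem measurableSet_uIcc, hgu]
      with x hgx hhx hx hgux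
    have hux : HasDerivAt u (g x) x := by
      rw [funext hu]
      exact (hgx hx 0 h0).const_add (u 0)
    have hHx : HasDerivAt H (h x) x := hhx hx 0 h0
    rw [((hHx.const_mul (-2)).exp.fun_mul hux.norm_sq).deriv]
    have hH0 : 0 ≤ H x := integral_nonneg (uIcc_of_le hs ▸ hx).1 fun t _ ↦ hh0 t
    have he : Real.exp (-2 * H x) = Real.exp (-H x) ^ 2 := by
      rw [← Real.exp_nat_mul]
      ring_nf
    have he1 : Real.exp (-H x) ≤ 1 := Real.exp_le_one_iff.mpr (by linarith)
    have hek : 0 ≤ Real.exp (-H x) * (k x * ‖u x‖) := by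
      have := hk0 x
      positivity
    rw [he, real_inner_comm]
    calc Real.exp (-H x) ^ 2 * (-2 * h x) * ‖u x‖ ^ 2
          + Real.exp (-H x) ^ 2 * (2 * inner ℝ (g x) (u x))
        = 2 * Real.exp (-H x) ^ 2 * (inner ℝ (g x) (u x) - h x * ‖u x‖ ^ 2) := by ring
      _ ≤ 2 * Real.exp (-H x) ^ 2 * (k x * ‖u x‖) := by gcongr; linarith
      _ ≤ 2 * (k x * (Real.exp (-H x) * ‖u x‖)) := by nlinarith
  have hftc := hw.integral_deriv_eq_sub
  have hmono := integral_mono_ae_restrict hs hw.intervalIntegrable_deriv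
    ((hk.mul_continuousOn hv.continuousOn).const_mul 2) hderiv
  simp only [H, integral_same, mul_zero, Real.exp_zero, one_mul] at hftc
  rw [intervalIntegral.integral_const_mul] at hmono
  linarith

theorem norm_le_exp_integral_mul_of_inner_le {u g : ℝ → F} {h k : ℝ → ℝ} {T : ℝ}
    (hu : ∀ x, u x = u 0 + ∫ t in (0:ℝ)..x, g t) (hg : IntegrableOn g (Icc 0 T))
    (hh : IntegrableOn h (Icc 0 T)) (hk : IntegrableOn k (Icc 0 T))
    (hh0 : ∀ t, 0 ≤ h t) (hk0 : ∀ t, 0 ≤ k t)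
    (hgu : ∀ᵐ τ ∂volume.restrict (Icc 0 T),
      inner ℝ (g τ) (u τ) ≤ k τ * ‖u τ‖ + h τ * ‖u τ‖ ^ 2) :
    ∀ t ∈ Icc 0 T, ∀ r ∈ Icc 0 t,
      ‖u r‖ ≤ Real.exp (∫ σ in (0:ℝ)..t, h σ) * (‖u 0‖ + 2 * ∫ s in (0:ℝ)..t, k s) := by
  intro t ht r hr
  set H : ℝ → ℝ := fun x ↦ ∫ t in (0:ℝ)..x, h t
  have hT : 0 ≤ T := ht.1.trans ht.2
  have hgT := (intervalIntegrable_iff_integrableOn_Icc_of_le hT).mpr hg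
  have hhT := (intervalIntegrable_iff_integrableOn_Icc_of_le hT).mpr hh
  have hkT := (intervalIntegrable_iff_integrableOn_Icc_of_le hT).mpr hk
  have hsub {s : ℝ} (hs : s ∈ Icc 0 T) : uIcc 0 s ⊆ uIcc 0 T :=
    uIcc_subset_uIcc_left (Icc_subset_uIcc hs)
  have hv : ContinuousOn (fun x ↦ Real.exp (-H x) * ‖u x‖) (Icc 0 t) := by
    rw [← uIcc_of_le ht.1]
    exact (absolutelyContinuousOnInterval_exp_neg_integral_mul_norm hu (hgT.mono_set (hsub ht))
      (hhT.mono_set (hsub ht))).continuousOn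
  have hvk (s : ℝ) (hs : s ∈ Icc 0 t) :
      (Real.exp (-H s) * ‖u s‖) ^ 2
        ≤ ‖u 0‖ ^ 2 + 2 * ∫ τ in (0:ℝ)..s, k τ * (Real.exp (-H τ) * ‖u τ‖) := by
    have hsT : s ∈ Icc 0 T := ⟨hs.1, hs.2.trans ht.2⟩
    convert exp_neg_two_mul_integral_mul_norm_sq_le hs.1 hu (hgT.mono_set (hsub hsT))
      (hhT.mono_set (hsub hsT)) (hkT.mono_set (hsub hsT)) hh0 hk0
      (ae_restrict_of_ae_restrict_of_subset (Icc_subset_Icc_right hsT.2) hgu) using 1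
    rw [mul_pow, ← Real.exp_nat_mul]
    simp only [H]
    ring_nf
  have hvr := le_add_two_mul_integral_of_sq_le (norm_nonneg (u 0)) hv (hkT.mono_set (hsub ht))
    hk0 hvk r hr
  have hHr : H r ≤ H t :=
    integral_mono_interval le_rfl hr.1 hr.2 (.of_forall hh0) (hhT.mono_set (hsub ht))
  calc ‖u r‖ = Real.exp (H r) * (Real.exp (-H r) * ‖u r‖) := by
        rw [← mul_assoc, ← Real.exp_add, add_neg_cancel, Real.exp_zero, one_mul]
    _ ≤ Real.exp (H t) * (‖u 0‖ + 2 * ∫ s in (0:ℝ)..t, k s) := by gcongr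

end Energy

theorem stmt_15_general {E : Type*} [NormedAddCommGroup E] [InnerProductSpace ℂ E]
    [CompleteSpace E]
    (T : ℝ)
    (u Qu f : ℝ → E)
    (hQu_int : IntegrableOn Qu (Set.Icc 0 T))
    (hf_int : IntegrableOn f (Set.Icc 0 T))
    (hu : ∀ s ∈ Set.Icc 0 T, u s = u 0 + ∫ r in (0:ℝ)..s, (f r - Qu r))
    (h : ℝ → ℝ) (hh_pos : ∀ t, 0 ≤ h t) (hh_int : IntegrableOn h (Set.Icc 0 T))
    (hGarding : ∀ᵐ τ ∂(volume.restrict (Set.Icc 0 T)),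
      -(h τ) * ‖u τ‖ ^ 2 ≤ (inner ℂ (Qu τ) (u τ) : ℂ).re) :
    ∀ t ∈ Set.Icc 0 T, ∀ r ∈ Set.Icc 0 t,
      ‖u r‖ ≤ Real.exp (∫ σ in (0:ℝ)..t, h σ)
        * (‖u 0‖ + 2 * ∫ s in (0:ℝ)..t, ‖f s‖) := by
  let _ := InnerProductSpace.rclikeToReal ℂ E
  set v : ℝ → E := fun x ↦ u 0 + ∫ r in (0:ℝ)..x, (f r - Qu r)
  have huv : EqOn u v (Icc 0 T) := hu
  have hv0 : v 0 = u 0 := by simp [v]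
  have hGarding' : ∀ᵐ τ ∂volume.restrict (Icc 0 T),
      inner ℝ (f τ - Qu τ) (v τ) ≤ ‖f τ‖ * ‖v τ‖ + h τ * ‖v τ‖ ^ 2 := by
    filter_upwards [hGarding, ae_restrict_mem measurableSet_Icc] with τ hτ hτT
    rw [← huv hτT, real_inner_eq_re_inner ℂ, inner_sub_left, map_sub]
    have := re_inner_le_norm (𝕜 := ℂ) (f τ) (u τ)
    simp only [RCLike.re_to_complex] at this ⊢
    linarith
  intro t ht r hr
  rw [huv ⟨hr.1, hr.2.trans ht.2⟩, ← hv0]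
  exact norm_le_exp_integral_mul_of_inner_le (g := fun r ↦ f r - Qu r) (fun x ↦ by rw [hv0])
    (hf_int.sub hQu_int) hh_int hf_int.norm hh_pos (fun _ ↦ norm_nonneg _) hGarding' t ht r hr

/-- Energy estimate: if `u ∈ AC([0,T];L²)` solves `∂_t u + Qu = f` (in integral form)
with `Qu ∈ L¹([0,T];L²)` and the Gårding-type inequality
`Re⟨Qu(τ), u(τ)⟩ ≥ -h(τ)‖u(τ)‖²` holds a.e. with `0 ≤ h ∈ L¹([0,T])`, then
`sup_{r∈[0,t]} ‖u(r)‖ ≤ exp(∫_0^t h)(‖u(0)‖ + 2∫_0^t ‖(∂_t u + Qu)(r)‖ dr)`.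
(The Hilbert space `E` plays the role of `L²(ℝⁿ)`.) -/
theorem stmt_15 {E : Type*} [NormedAddCommGroup E] [InnerProductSpace ℂ E]
    [CompleteSpace E]
    (T : ℝ) (hT : 0 < T)
    (u Qu f : ℝ → E)
    (hQu_int : IntegrableOn Qu (Set.Icc 0 T))
    (hf_int : IntegrableOn f (Set.Icc 0 T))
    (hu : ∀ s ∈ Set.Icc 0 T, u s = u 0 + ∫ r in (0:ℝ)..s, (f r - Qu r))
    (h : ℝ → ℝ) (hh_pos : ∀ t, 0 ≤ h t) (hh_int : IntegrableOn h (Set.Icc 0 T))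
    (hGarding : ∀ᵐ τ ∂(volume.restrict (Set.Icc 0 T)),
      -(h τ) * ‖u τ‖ ^ 2 ≤ (inner ℂ (Qu τ) (u τ) : ℂ).re) :
    ∀ t ∈ Set.Icc 0 T, ∀ r ∈ Set.Icc 0 t,
      ‖u r‖ ≤ Real.exp (∫ σ in (0:ℝ)..t, h σ)
        * (‖u 0‖ + 2 * ∫ s in (0:ℝ)..t, ‖f s‖) :=
  stmt_15_general T u Qu f hQu_int hf_int hu h hh_pos hh_int hGarding
end

section
/- Let w₁(t) = |t| and w₂(t) = t. There do not exist C^∞ functions a₁, a₂ : ℝ → ℝ and a Lipschitz continuous function v : ℝ → ℝ such that w₁ = a₁ ∘ v and w₂ = a₂ ∘ v. -/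
/-- The pair of Lipschitz functions `w₁(t) = |t|`, `w₂(t) = t` cannot be factored as
`w₁ = a₁ ∘ v`, `w₂ = a₂ ∘ v` with `a₁, a₂` smooth and `v` Lipschitz continuous. -/
theorem stmt_16 :
    ¬ ∃ (a₁ a₂ v : ℝ → ℝ), ContDiff ℝ (⊤ : ℕ∞) a₁ ∧ ContDiff ℝ (⊤ : ℕ∞) a₂ ∧
      (∃ K : NNReal, LipschitzWith K v) ∧
      (∀ t : ℝ, |t| = a₁ (v t)) ∧ (∀ t : ℝ, t = a₂ (v t)) := by
  rintro ⟨a₁, a₂, v, ha₁, ha₂, ⟨K, hv⟩, h1, h2⟩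
  set p := v 0 with hp
  set c := deriv a₁ p with hcdef
  set d := deriv a₂ p with hddef
  have hc : HasDerivAt a₁ c p := ((ha₁.differentiable (by simp)) p).hasDerivAt
  have hd : HasDerivAt a₂ d p := ((ha₂.differentiable (by simp)) p).hasDerivAt
  set Kr : ℝ := (K : ℝ) with hKrdef
  have hKr0 : (0:ℝ) ≤ Kr := K.coe_nonneg
  set ε : ℝ := 1 / (4 * (Kr + 1)) with hεdef
  have hεpos : 0 < ε := by positivity
  have hεK : ε * Kr ≤ 1 / 4 := by
    rw [hεdef, div_mul_eq_mul_div, div_le_div_iff₀ (by positivity) (by norm_num)]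
    nlinarith
  have h₁b := ((hasDerivAt_iff_isLittleO.mp hc).def hεpos)
  have h₂b := ((hasDerivAt_iff_isLittleO.mp hd).def hεpos)
  have hb := h₁b.and h₂b
  rw [Metric.eventually_nhds_iff] at hb
  obtain ⟨δ, hδ, hball⟩ := hb
  set t : ℝ := δ / (2 * (Kr + 1)) with htdef
  have ht : 0 < t := by positivity
  have hdist : ∀ s : ℝ, |s| = t → dist (v s) p < δ := by
    intro s hs
    have := hv.dist_le_mul s 0
    rw [Real.dist_eq, Real.dist_eq, sub_zero, hs] at this
    rw [Real.dist_eq]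
    calc |v s - p| ≤ Kr * t := this
      _ < δ := by
          rw [htdef, ← mul_div_assoc, div_lt_iff₀ (by positivity)]
          nlinarith
  have hAt := hball (hdist t (abs_of_pos ht))
  have hAmt := hball (hdist (-t) (by rw [abs_neg]; exact abs_of_pos ht))
  set u : ℝ := v t - p with hudef
  set u' : ℝ := v (-t) - p with hu'def
  -- Lipschitz bounds
  have hu : |u| ≤ Kr * t := by
    have := hv.dist_le_mul t 0
    rw [Real.dist_eq, Real.dist_eq, sub_zero, abs_of_pos ht] at this
    exact this
  have hu' : |u'| ≤ Kr * t := by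
    have := hv.dist_le_mul (-t) 0
    rw [Real.dist_eq, Real.dist_eq, sub_zero, abs_neg, abs_of_pos ht] at this
    exact this
  -- rewrite the bounds
  have ha1p : a₁ p = 0 := by rw [hp, ← h1 0, abs_zero]
  have ha2p : a₂ p = 0 := by rw [hp, ← h2 0]
  have ha1t : a₁ (v t) = t := by rw [← h1 t, abs_of_pos ht]
  have ha1mt : a₁ (v (-t)) = t := by rw [← h1 (-t), abs_neg, abs_of_pos ht]
  have ha2t : a₂ (v t) = t := (h2 t).symm
  have ha2mt : a₂ (v (-t)) = -t := (h2 (-t)).symm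
  obtain ⟨hA1, hA2⟩ := hAt
  obtain ⟨hB1, hB2⟩ := hAmt
  simp only [Real.norm_eq_abs, smul_eq_mul, ha1p, ha2p, ha1t, ha1mt, ha2t, ha2mt,
    sub_zero, ← hudef, ← hu'def] at hA1 hA2 hB1 hB2
  -- hA1 : |t - u * c| ≤ ε * |u|, hA2 : |t - u * d| ≤ ε * |u|
  -- hB1 : |t - u' * c| ≤ ε * |u'|, hB2 : |-t - u' * d| ≤ ε * |u'|
  have hεu : ε * |u| ≤ t / 4 := by
    calc ε * |u| ≤ ε * (Kr * t) := by
          exact mul_le_mul_of_nonneg_left hu hεpos.le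
      _ = (ε * Kr) * t := by ring
      _ ≤ (1/4) * t := mul_le_mul_of_nonneg_right hεK ht.le
      _ = t / 4 := by ring
  have hεu' : ε * |u'| ≤ t / 4 := by
    calc ε * |u'| ≤ ε * (Kr * t) := by
          exact mul_le_mul_of_nonneg_left hu' hεpos.le
      _ = (ε * Kr) * t := by ring
      _ ≤ (1/4) * t := mul_le_mul_of_nonneg_right hεK ht.le
      _ = t / 4 := by ring
  have e1 : |t - u * c| ≤ t / 4 := hA1.trans hεu
  have e3 : |t - u * d| ≤ t / 4 := hA2.trans hεu
  have e2 : |t - u' * c| ≤ t / 4 := hB1.trans hεu'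
  have e4 : |-t - u' * d| ≤ t / 4 := hB2.trans hεu'
  -- key combined inequalities
  have h5 : |d * t - c * t| ≤ (|c| + |d|) * (t / 4) := by
    have : d * t - c * t = d * (t - u * c) - c * (t - u * d) := by ring
    rw [this]
    calc |d * (t - u * c) - c * (t - u * d)|
        ≤ |d * (t - u * c)| + |c * (t - u * d)| := abs_sub _ _
      _ = |d| * |t - u * c| + |c| * |t - u * d| := by rw [abs_mul, abs_mul]
      _ ≤ |d| * (t/4) + |c| * (t/4) := by
          gcongr
      _ = (|c| + |d|) * (t / 4) := by ring
  have h6 : |d * t + c * t| ≤ (|c| + |d|) * (t / 4) := by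
    have : d * t + c * t = d * (t - u' * c) - c * (-t - u' * d) := by ring
    rw [this]
    calc |d * (t - u' * c) - c * (-t - u' * d)|
        ≤ |d * (t - u' * c)| + |c * (-t - u' * d)| := abs_sub _ _
      _ = |d| * |t - u' * c| + |c| * |-t - u' * d| := by rw [abs_mul, abs_mul]
      _ ≤ |d| * (t/4) + |c| * (t/4) := by
          gcongr
      _ = (|c| + |d|) * (t / 4) := by ring
  have hcc : 2 * (|c| * t) ≤ (|c| + |d|) * (t / 4) + (|c| + |d|) * (t / 4) := by
    calc 2 * (|c| * t) = |(d * t + c * t) - (d * t - c * t)| := by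
          rw [show (d * t + c * t) - (d * t - c * t) = 2 * (c * t) by ring,
            abs_mul, abs_mul, abs_of_pos ht, abs_two]
      _ ≤ |d * t + c * t| + |d * t - c * t| := abs_sub _ _
      _ ≤ _ := add_le_add h6 h5
  have hdd : 2 * (|d| * t) ≤ (|c| + |d|) * (t / 4) + (|c| + |d|) * (t / 4) := by
    calc 2 * (|d| * t) = |(d * t + c * t) + (d * t - c * t)| := by
          rw [show (d * t + c * t) + (d * t - c * t) = 2 * (d * t) by ring,
            abs_mul, abs_mul, abs_of_pos ht, abs_two]
      _ ≤ |d * t + c * t| + |d * t - c * t| := abs_add_le _ _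
      _ ≤ _ := add_le_add h6 h5
  have hcd0 : |c| + |d| ≤ 0 := by nlinarith [abs_nonneg c, abs_nonneg d]
  have hc0 : c = 0 := by
    have := abs_nonneg c
    have := abs_nonneg d
    have : |c| = 0 := le_antisymm (by linarith) (abs_nonneg c)
    exact abs_eq_zero.mp this
  rw [hc0] at e1
  rw [mul_zero, sub_zero, abs_of_pos ht] at e1
  linarith
end

section
/- Let 0 < σ < 1 and a₁(x,y) = -(1/σ)·max(x-y,0)^σ · χ(x,y) with χ ∈ C_c^∞(ℝ²), χ ≡ 1 near the origin. Then a₁ is σ-Hölder continuous and compactly supported, but a₁ is not Lipschitz continuous; moreover div(a₁, a₁)(x,y) = -(1/σ) max(x-y,0)^σ (∂_x χ + ∂_y χ)(x,y), which is σ-Hölder continuous and bounded. -/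
open MeasureTheory

private lemma rpow_add_le' (σ : ℝ) (h0 : 0 ≤ σ) (h1 : σ ≤ 1) {a b : ℝ} (ha : 0 ≤ a) (hb : 0 ≤ b) :
    (a + b) ^ σ ≤ a ^ σ + b ^ σ := by
  have h := NNReal.rpow_add_le_add_rpow a.toNNReal b.toNNReal h0 h1
  have h2 := NNReal.coe_le_coe.2 h
  rw [← Real.toNNReal_add ha hb] at h2
  simpa [NNReal.coe_rpow, Real.coe_toNNReal _ ha, Real.coe_toNNReal _ hb,
    Real.coe_toNNReal _ (add_nonneg ha hb)] using h2

private lemma max_rpow_holder (σ : ℝ) (h0 : 0 < σ) (h1 : σ ≤ 1) (a b : ℝ) :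
    |max a 0 ^ σ - max b 0 ^ σ| ≤ |a - b| ^ σ := by
  wlog h : max b 0 ≤ max a 0 generalizing a b
  · have := this b a (le_of_not_ge h)
    rwa [abs_sub_comm, abs_sub_comm b a] at this
  have hb0 : (0:ℝ) ≤ max b 0 := le_max_right _ _
  have hnn : max b 0 ^ σ ≤ max a 0 ^ σ := Real.rpow_le_rpow hb0 h h0.le
  rw [abs_of_nonneg (by linarith)]
  have h2 : max a 0 ^ σ - max b 0 ^ σ ≤ (max a 0 - max b 0) ^ σ := by
    have := rpow_add_le' σ h0.le h1 (sub_nonneg.2 h) hb0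
    rw [sub_add_cancel] at this
    linarith
  refine h2.trans (Real.rpow_le_rpow (by linarith) ?_ h0.le)
  exact (le_abs_self _).trans (abs_max_sub_max_le_abs a b 0)

private lemma holder_mul_aux (σ : ℝ) (h0 : 0 < σ) (h1 : σ ≤ 1)
    (g ψ : ℝ × ℝ → ℝ) (Kg L B M : ℝ) (hL : 0 ≤ L) (hB : 0 ≤ B) (hM : 0 ≤ M) (hKg : 0 ≤ Kg)
    (hg : ∀ p q, |g p - g q| ≤ Kg * ‖p - q‖ ^ σ)
    (hψL : ∀ p q, |ψ p - ψ q| ≤ L * ‖p - q‖)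
    (hψB : ∀ p, |ψ p| ≤ B)
    (hgM : ∀ p, ψ p ≠ 0 → |g p| ≤ M) :
    ∀ p q, |g p * ψ p - g q * ψ q| ≤ (Kg * B + M * L + 2 * M * B) * ‖p - q‖ ^ σ := by
  intro p q
  set t := ‖p - q‖ with ht
  have ht0 : 0 ≤ t := norm_nonneg _
  have htσ0 : 0 ≤ t ^ σ := Real.rpow_nonneg ht0 σ
  have hbd : ∀ r : ℝ × ℝ, |g r * ψ r| ≤ M * B := by
    intro r
    by_cases hr : ψ r = 0
    · simp [hr]; positivity
    · rw [abs_mul]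
      exact mul_le_mul (hgM r hr) (hψB r) (abs_nonneg _) hM
  rcases eq_or_lt_of_le ht0 with hteq | htpos
  · have hpq : p = q := by
      have : p - q = 0 := by
        rwa [eq_comm, norm_eq_zero] at hteq
      exact sub_eq_zero.1 this
    rw [hpq]; simp; positivity
  rcases le_or_gt t 1 with hle | hgt
  · have htt : t ≤ t ^ σ := by
      calc t = t ^ (1:ℝ) := (Real.rpow_one t).symm
        _ ≤ t ^ σ := Real.rpow_le_rpow_of_exponent_ge htpos hle h1
    by_cases hq : ψ q = 0
    · by_cases hp : ψ p = 0
      · rw [hp, hq]; simp; positivity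
      · have : |g p * ψ p - g q * ψ q| = |g p| * |ψ p - ψ q| := by
          rw [hq, mul_zero, sub_zero, ← abs_mul]
          congr 1; ring
        rw [this]
        calc |g p| * |ψ p - ψ q| ≤ M * (L * t) :=
              mul_le_mul (hgM p hp) (hψL p q) (abs_nonneg _) hM
          _ = M * L * t := by ring
          _ ≤ M * L * t ^ σ := mul_le_mul_of_nonneg_left htt (by positivity)
          _ ≤ (Kg * B + M * L + 2 * M * B) * t ^ σ := by
              nlinarith [mul_nonneg (by positivity : (0:ℝ) ≤ Kg * B + 2 * M * B) htσ0]
    · calc |g p * ψ p - g q * ψ q| = |(g p - g q) * ψ p + g q * (ψ p - ψ q)| := by ring_nf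
        _ ≤ |(g p - g q) * ψ p| + |g q * (ψ p - ψ q)| := abs_add_le _ _
        _ = |g p - g q| * |ψ p| + |g q| * |ψ p - ψ q| := by rw [abs_mul, abs_mul]
        _ ≤ (Kg * t ^ σ) * B + M * (L * t) := by
            refine add_le_add (mul_le_mul (hg p q) (hψB p) (abs_nonneg _) (by positivity))
              (mul_le_mul (hgM q hq) (hψL p q) (abs_nonneg _) hM)
        _ ≤ (Kg * B + M * L + 2 * M * B) * t ^ σ := by
            nlinarith [mul_le_mul_of_nonneg_left htt (mul_nonneg hM hL),
              mul_nonneg (mul_nonneg (mul_nonneg (by norm_num : (0:ℝ) ≤ 2) hM) hB) htσ0]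
  · have hone : (1:ℝ) ≤ t ^ σ := Real.one_le_rpow hgt.le h0.le
    calc |g p * ψ p - g q * ψ q| ≤ |g p * ψ p| + |g q * ψ q| := abs_sub _ _
      _ ≤ M * B + M * B := add_le_add (hbd p) (hbd q)
      _ = 2 * M * B * 1 := by ring
      _ ≤ (Kg * B + M * L + 2 * M * B) * t ^ σ := by
          nlinarith [mul_le_mul_of_nonneg_left hone (by positivity : (0:ℝ) ≤ 2 * M * B),
            mul_nonneg (by positivity : (0:ℝ) ≤ Kg * B + M * L) htσ0]

private lemma key_div (G : ℝ × ℝ → ℝ) (hGc : Continuous G)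
    (hGdiag : ∀ x y u : ℝ, G (x, x - u) = G (y, y - u))
    (ψ : ℝ × ℝ → ℝ) (hψs : ContDiff ℝ (⊤ : ℕ∞) ψ) (hψc : HasCompactSupport ψ) :
    ∫ p : ℝ × ℝ, G p * fderiv ℝ ψ p (1, 1) = 0 := by
  set F : ℝ × ℝ → ℝ := fun p => G p * fderiv ℝ ψ p (1, 1) with hF
  have hDψc : Continuous (fderiv ℝ ψ) := hψs.continuous_fderiv (by simp)
  have hFcont : Continuous F := hGc.mul (hDψc.clm_apply continuous_const)
  have hFsupp : HasCompactSupport F := by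
    have h1 : HasCompactSupport (fun p => fderiv ℝ ψ p (1, 1)) :=
      (hψc.fderiv (𝕜 := ℝ)).comp_left (g := fun L : ℝ × ℝ →L[ℝ] ℝ => L (1, 1)) (by simp)
    exact h1.mul_left
  let e : ℝ × ℝ ≃ₜ ℝ × ℝ :=
    { toFun := fun q => (q.1, q.1 - q.2)
      invFun := fun q => (q.1, q.1 - q.2)
      left_inv := fun q => by simp
      right_inv := fun q => by simp
      continuous_toFun := by fun_prop
      continuous_invFun := by fun_prop }
  have hint : Integrable F := hFcont.integrable_of_hasCompactSupport hFsupp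
  have hFe : Integrable (F ∘ e) :=
    (hFcont.comp e.continuous).integrable_of_hasCompactSupport (hFsupp.comp_homeomorph e)
  have hvol : (volume : Measure (ℝ × ℝ)) = (volume : Measure ℝ).prod volume :=
    rfl
  rw [hvol] at hint ⊢
  rw [integral_prod _ hint]
  have step2 : ∀ x : ℝ, (∫ y : ℝ, F (x, y)) = ∫ u : ℝ, F (x, x - u) :=
    fun x => (integral_sub_left_eq_self (fun y => F (x, y)) volume x).symm
  simp_rw [step2]
  rw [MeasureTheory.integral_integral_swap (by rw [show (Function.uncurry fun x u => F (x, x - u)) = F ∘ e from rfl, ← hvol]; exact hFe)]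
  have inner : ∀ u : ℝ, (∫ x : ℝ, F (x, x - u)) = 0 := by
    intro u
    set w : ℝ → ℝ := fun x => ψ (x, x - u) with hw
    have hline : ∀ x : ℝ, HasDerivAt w (fderiv ℝ ψ (x, x - u) (1, 1)) x := by
      intro x
      have h1 : HasDerivAt (fun x : ℝ => ((x, x - u) : ℝ × ℝ)) (1, 1) x :=
        (hasDerivAt_id x).prodMk ((hasDerivAt_id x).sub_const u)
      exact ((hψs.differentiable (by simp) (x, x - u)).hasFDerivAt).comp_hasDerivAt x h1
    have hwc : ContDiff ℝ 1 w :=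
      (hψs.comp (contDiff_id.prodMk (contDiff_id.sub contDiff_const))).of_le (by simp)
    have hwsupp : HasCompactSupport w := by
      have hiso : Isometry (fun x : ℝ => ((x, x - u) : ℝ × ℝ)) := by
        apply Isometry.of_dist_eq; intro a b
        simp [Prod.dist_eq, Real.dist_eq, sub_sub_sub_cancel_right]
      exact hψc.comp_isClosedEmbedding hiso.isClosedEmbedding
    have hderiv_int : Integrable (deriv w) :=
      (hwc.continuous_deriv le_rfl).integrable_of_hasCompactSupport hwsupp.deriv
    have hsum := intervalIntegral.integral_Iic_add_Ioi (b := (0:ℝ)) (μ := volume)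
      hderiv_int.integrableOn hderiv_int.integrableOn
    rw [HasCompactSupport.integral_Iic_deriv_eq hwc hwsupp 0,
      HasCompactSupport.integral_Ioi_deriv_eq hwc hwsupp 0] at hsum
    have hzero : (∫ x : ℝ, deriv w x) = 0 := by rw [← hsum]; ring
    have hcongr : (fun x : ℝ => F (x, x - u)) = fun x : ℝ => G (0, 0 - u) * deriv w x := by
      funext x
      rw [hF]
      simp only
      rw [hGdiag x 0 u, (hline x).deriv]
    rw [hcongr, integral_const_mul, hzero, mul_zero]
  simp_rw [inner]
  exact integral_zero _ _

set_option maxHeartbeats 1600000 in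
/-- For `0 < σ < 1`, the coefficient `a₁(x,y) = -(1/σ)(x-y)₊^σ χ(x,y)` (with `χ` a smooth
cutoff equal to `1` near the origin) is `σ`-Hölder continuous and compactly supported but
not Lipschitz; moreover the divergence of the vector field `(a₁, a₁)` equals (in the sense
of distributions) `d(x,y) = -(1/σ)(x-y)₊^σ (∂_x χ + ∂_y χ)(x,y)`, which is `σ`-Hölder
continuous and bounded. -/
theorem stmt_19 (σ : ℝ) (hσ₀ : 0 < σ) (hσ₁ : σ < 1)
    (χ : ℝ × ℝ → ℝ) (hχ_smooth : ContDiff ℝ (⊤ : ℕ∞) χ) (hχ_supp : HasCompactSupport χ)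
    (hχ_one : ∃ U ∈ nhds ((0:ℝ), (0:ℝ)), Set.EqOn χ 1 U)
    (a₁ : ℝ × ℝ → ℝ)
    (ha₁ : ∀ x y : ℝ, a₁ (x, y) = -(1/σ) * (max (x - y) 0) ^ σ * χ (x, y))
    (d : ℝ × ℝ → ℝ)
    (hd : ∀ x y : ℝ, d (x, y) =
      -(1/σ) * (max (x - y) 0) ^ σ * (fderiv ℝ χ (x, y) (1, 0) + fderiv ℝ χ (x, y) (0, 1))) :
    (∃ C > (0:ℝ), ∀ p q : ℝ × ℝ, |a₁ p - a₁ q| ≤ C * ‖p - q‖ ^ σ) ∧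
    HasCompactSupport a₁ ∧
    (¬ ∃ K : ℝ, ∀ p q : ℝ × ℝ, |a₁ p - a₁ q| ≤ K * ‖p - q‖) ∧
    (∀ φ : ℝ × ℝ → ℝ, ContDiff ℝ (⊤ : ℕ∞) φ → HasCompactSupport φ →
      -∫ p : ℝ × ℝ, a₁ p * (fderiv ℝ φ p (1, 0) + fderiv ℝ φ p (0, 1))
        = ∫ p : ℝ × ℝ, d p * φ p) ∧
    (∃ C' > (0:ℝ), (∀ p q : ℝ × ℝ, |d p - d q| ≤ C' * ‖p - q‖ ^ σ) ∧ ∀ p, |d p| ≤ C') := by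
  have hσ1' : σ ≤ 1 := hσ₁.le
  set G : ℝ × ℝ → ℝ := fun p => -(1/σ) * max (p.1 - p.2) 0 ^ σ with hG
  have ha₁' : a₁ = fun p => G p * χ p := by
    funext p; obtain ⟨x, y⟩ := p; exact ha₁ x y
  set η : ℝ × ℝ → ℝ := fun p => fderiv ℝ χ p (1, 0) + fderiv ℝ χ p (0, 1) with hη
  have hd' : d = fun p => G p * η p := by
    funext p; obtain ⟨x, y⟩ := p; exact hd x y
  have hGc : Continuous G :=
    continuous_const.mul ((Real.continuous_rpow_const hσ₀.le).comp
      ((continuous_fst.sub continuous_snd).max continuous_const))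
  -- G is `σ`-Hölder with constant 2/σ
  have hGh : ∀ p q : ℝ × ℝ, |G p - G q| ≤ (2 / σ) * ‖p - q‖ ^ σ := by
    intro p q
    have h1 : |G p - G q| = (1/σ) * |max (p.1 - p.2) 0 ^ σ - max (q.1 - q.2) 0 ^ σ| := by
      rw [hG]
      simp only
      rw [show -(1/σ) * (max (p.1 - p.2) 0 ^ σ) - -(1/σ) * (max (q.1 - q.2) 0 ^ σ)
          = -((1/σ) * (max (p.1 - p.2) 0 ^ σ - max (q.1 - q.2) 0 ^ σ)) from by ring,
        abs_neg, abs_mul, abs_of_pos (show (0:ℝ) < 1/σ by positivity)]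
    have h2 := max_rpow_holder σ hσ₀ hσ1' (p.1 - p.2) (q.1 - q.2)
    have h3 : |(p.1 - p.2) - (q.1 - q.2)| ≤ 2 * ‖p - q‖ := by
      have e1 : (p.1 - p.2) - (q.1 - q.2) = (p - q).1 - (p - q).2 := by
        simp only [Prod.fst_sub, Prod.snd_sub]; ring
      rw [e1]
      have hf := norm_fst_le (p - q)
      have hs := norm_snd_le (p - q)
      rw [Real.norm_eq_abs] at hf hs
      calc |(p - q).1 - (p - q).2| ≤ |(p - q).1| + |(p - q).2| := abs_sub _ _
        _ ≤ ‖p - q‖ + ‖p - q‖ := add_le_add hf hs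
        _ = 2 * ‖p - q‖ := by ring
    have h4 : |(p.1 - p.2) - (q.1 - q.2)| ^ σ ≤ (2 * ‖p - q‖) ^ σ :=
      Real.rpow_le_rpow (abs_nonneg _) h3 hσ₀.le
    have h5 : (2 * ‖p - q‖) ^ σ ≤ 2 * ‖p - q‖ ^ σ := by
      rw [Real.mul_rpow (by norm_num) (norm_nonneg _)]
      have h6 : (2:ℝ) ^ σ ≤ 2 := by
        calc (2:ℝ) ^ σ ≤ (2:ℝ) ^ (1:ℝ) := Real.rpow_le_rpow_of_exponent_le one_le_two hσ1'
          _ = 2 := Real.rpow_one 2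
      exact mul_le_mul_of_nonneg_right h6 (Real.rpow_nonneg (norm_nonneg _) σ)
    rw [h1]
    calc (1/σ) * |max (p.1 - p.2) 0 ^ σ - max (q.1 - q.2) 0 ^ σ|
        ≤ (1/σ) * (2 * ‖p - q‖ ^ σ) :=
          mul_le_mul_of_nonneg_left (h2.trans (h4.trans h5)) (by positivity)
      _ = (2/σ) * ‖p - q‖ ^ σ := by ring
  -- bound for G on the support of χ
  obtain ⟨M₀, hM₀⟩ := IsCompact.exists_bound_of_continuousOn hχ_supp hGc.continuousOn
  set M := max M₀ 0 with hMdef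
  have hM0 : 0 ≤ M := le_max_right _ _
  have hGM : ∀ p, p ∈ tsupport χ → |G p| ≤ M := by
    intro p hp
    have := hM₀ p hp
    rw [Real.norm_eq_abs] at this
    exact this.trans (le_max_left _ _)
  -- χ is Lipschitz and bounded
  obtain ⟨Lχ, hLχ⟩ := hχ_smooth.lipschitzWith_of_hasCompactSupport hχ_supp (by simp)
  have hχLip : ∀ p q : ℝ × ℝ, |χ p - χ q| ≤ (Lχ : ℝ) * ‖p - q‖ := by
    intro p q
    have := hLχ.dist_le_mul p q
    rwa [Real.dist_eq, dist_eq_norm] at this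
  obtain ⟨Bχ₀, hBχ₀⟩ := hχ_supp.exists_bound_of_continuous hχ_smooth.continuous
  set Bχ := max Bχ₀ 0 with hBχdef
  have hBχ0 : 0 ≤ Bχ := le_max_right _ _
  have hχB : ∀ p, |χ p| ≤ Bχ := by
    intro p
    have := hBχ₀ p
    rw [Real.norm_eq_abs] at this
    exact this.trans (le_max_left _ _)
  -- facts about η
  have hfdC : ContDiff ℝ (⊤ : ℕ∞) (fderiv ℝ χ) := hχ_smooth.fderiv_right (by simp)
  have hηc : Continuous η :=
    (hfdC.continuous.clm_apply continuous_const).add (hfdC.continuous.clm_apply continuous_const)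
  have hηsupp : HasCompactSupport η :=
    (hχ_supp.fderiv (𝕜 := ℝ)).comp_left
      (g := fun L : ℝ × ℝ →L[ℝ] ℝ => L (1, 0) + L (0, 1)) (by simp)
  obtain ⟨Lf, hLf⟩ := hfdC.lipschitzWith_of_hasCompactSupport (hχ_supp.fderiv (𝕜 := ℝ)) (by simp)
  have hηLip : ∀ p q : ℝ × ℝ, |η p - η q| ≤ (2 * Lf) * ‖p - q‖ := by
    intro p q
    have hd1 : ‖fderiv ℝ χ p - fderiv ℝ χ q‖ ≤ (Lf : ℝ) * ‖p - q‖ := by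
      have := hLf.dist_le_mul p q
      rwa [dist_eq_norm, dist_eq_norm] at this
    have e10 : ‖((1:ℝ), (0:ℝ))‖ = 1 := by simp [Prod.norm_def]
    have e01 : ‖((0:ℝ), (1:ℝ))‖ = 1 := by simp [Prod.norm_def]
    have heq : η p - η q = (fderiv ℝ χ p - fderiv ℝ χ q) (1, 0)
        + (fderiv ℝ χ p - fderiv ℝ χ q) (0, 1) := by
      simp only [hη, ContinuousLinearMap.sub_apply]; ring
    rw [heq]
    calc |(fderiv ℝ χ p - fderiv ℝ χ q) (1, 0) + (fderiv ℝ χ p - fderiv ℝ χ q) (0, 1)|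
        ≤ |(fderiv ℝ χ p - fderiv ℝ χ q) (1, 0)| + |(fderiv ℝ χ p - fderiv ℝ χ q) (0, 1)| :=
          abs_add_le _ _
      _ ≤ ‖fderiv ℝ χ p - fderiv ℝ χ q‖ * ‖((1:ℝ), (0:ℝ))‖
          + ‖fderiv ℝ χ p - fderiv ℝ χ q‖ * ‖((0:ℝ), (1:ℝ))‖ := by
          rw [← Real.norm_eq_abs, ← Real.norm_eq_abs]
          exact add_le_add (ContinuousLinearMap.le_opNorm _ _)
            (ContinuousLinearMap.le_opNorm _ _)
      _ = 2 * ‖fderiv ℝ χ p - fderiv ℝ χ q‖ := by rw [e10, e01]; ring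
      _ ≤ 2 * ((Lf : ℝ) * ‖p - q‖) := by linarith
      _ = (2 * Lf) * ‖p - q‖ := by ring
  obtain ⟨Bη₀, hBη₀⟩ := hηsupp.exists_bound_of_continuous hηc
  set Bη := max Bη₀ 0 with hBηdef
  have hBη0 : 0 ≤ Bη := le_max_right _ _
  have hηB : ∀ p, |η p| ≤ Bη := by
    intro p
    have := hBη₀ p
    rw [Real.norm_eq_abs] at this
    exact this.trans (le_max_left _ _)
  have hgMη : ∀ p, η p ≠ 0 → |G p| ≤ M := by
    intro p hp
    apply hGM
    have hfd : fderiv ℝ χ p ≠ 0 := by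
      intro hz
      apply hp
      rw [hη]
      simp [hz]
    exact support_fderiv_subset ℝ (f := χ) hfd
  -- Part 1 : Hölder continuity of a₁
  have part1 : ∃ C > (0:ℝ), ∀ p q : ℝ × ℝ, |a₁ p - a₁ q| ≤ C * ‖p - q‖ ^ σ := by
    have hh := holder_mul_aux σ hσ₀ hσ1' G χ (2/σ) Lχ Bχ M Lχ.coe_nonneg hBχ0 hM0
      (by positivity) hGh hχLip hχB
      (fun p hp => hGM p (subset_closure hp))
    refine ⟨(2/σ) * Bχ + M * Lχ + 2 * M * Bχ + 1, by positivity, fun p q => ?_⟩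
    rw [ha₁']
    refine (hh p q).trans ?_
    have : (0:ℝ) ≤ ‖p - q‖ ^ σ := Real.rpow_nonneg (norm_nonneg _) σ
    nlinarith
  -- Part 2 : compact support
  have part2 : HasCompactSupport a₁ := by
    rw [ha₁']; exact hχ_supp.mul_left
  -- Part 3 : not Lipschitz
  have part3 : ¬ ∃ K : ℝ, ∀ p q : ℝ × ℝ, |a₁ p - a₁ q| ≤ K * ‖p - q‖ := by
    rintro ⟨K, hK⟩
    obtain ⟨U, hU, hU1⟩ := hχ_one
    obtain ⟨ε, hε0, hεU⟩ := Metric.mem_nhds_iff.1 hU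
    set K' := max K 1 with hK'def
    have hK'1 : (1:ℝ) ≤ K' := le_max_right _ _
    have hK'0 : (0:ℝ) < K' := lt_of_lt_of_le one_pos hK'1
    set x := min (ε/2) ((2*K'*σ)⁻¹ ^ (1-σ)⁻¹) with hxdef
    have hx0 : 0 < x :=
      lt_min (by positivity) (Real.rpow_pos_of_pos (by positivity) _)
    have hxε : x < ε := lt_of_le_of_lt (min_le_left _ _) (by linarith)
    have hmem : ((x:ℝ), (0:ℝ)) ∈ U := by
      apply hεU
      rw [Metric.mem_ball, Prod.dist_eq]
      simp only [Real.dist_eq, sub_zero, abs_of_pos hx0, sub_self, abs_zero]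
      rw [max_eq_left hx0.le]
      exact hxε
    have hmem0 : ((0:ℝ), (0:ℝ)) ∈ U := hεU (Metric.mem_ball_self hε0)
    have hval : a₁ (x, 0) = -(1/σ) * x ^ σ := by
      rw [ha₁ x 0, hU1 hmem]
      rw [sub_zero, max_eq_left hx0.le]
      norm_num
    have hval0 : a₁ (0, 0) = 0 := by
      rw [ha₁ 0 0]
      norm_num [Real.zero_rpow hσ₀.ne']
    have hnorm : ‖(((x:ℝ), (0:ℝ)) : ℝ × ℝ) - ((0:ℝ), (0:ℝ))‖ = x := by
      rw [Prod.norm_def]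
      simp only [Prod.fst_sub, Prod.snd_sub, sub_zero, Real.norm_eq_abs,
        abs_of_pos hx0, sub_self, abs_zero]
      exact max_eq_left hx0.le
    have hK2 := hK (x, 0) (0, 0)
    rw [hval, hval0, hnorm, sub_zero] at hK2
    have habs : |-(1/σ) * x ^ σ| = (1/σ) * x ^ σ := by
      rw [abs_mul, abs_neg, abs_of_pos (show (0:ℝ) < 1/σ by positivity),
        abs_of_pos (Real.rpow_pos_of_pos hx0 σ)]
    rw [habs] at hK2
    -- derive a contradiction
    have hxs : x ^ (1-σ) ≤ (2*K'*σ)⁻¹ := by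
      have hxle : x ≤ (2*K'*σ)⁻¹ ^ (1-σ)⁻¹ := min_le_right _ _
      calc x ^ (1-σ) ≤ ((2*K'*σ)⁻¹ ^ (1-σ)⁻¹) ^ (1-σ) :=
            Real.rpow_le_rpow hx0.le hxle (by linarith)
        _ = (2*K'*σ)⁻¹ := by
            rw [← Real.rpow_mul (by positivity), inv_mul_cancel₀
              (by linarith : (1:ℝ) - σ ≠ 0), Real.rpow_one]
    have hxsplit : x = x ^ (1-σ) * x ^ σ := by
      rw [← Real.rpow_add hx0]
      norm_num
    have hKσx : K' * σ * x ^ (1-σ) ≤ 1/2 := by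
      have h1 := mul_le_mul_of_nonneg_left hxs (by positivity : (0:ℝ) ≤ K' * σ)
      have h2 : K' * σ * (2*K'*σ)⁻¹ = 1/2 := by
        rw [mul_inv, mul_inv]
        field_simp
      rw [h2] at h1
      exact h1
    have hfinal : K * x < (1/σ) * x ^ σ := by
      have hxσpos : 0 < x ^ σ := Real.rpow_pos_of_pos hx0 σ
      have hx1σpos : 0 < x ^ (1-σ) := Real.rpow_pos_of_pos hx0 _
      have hKx : K * x ≤ K' * x := by
        have : K ≤ K' := le_max_left _ _
        nlinarith
      have h7 : K' * x = (K' * x ^ (1-σ)) * x ^ σ := by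
        rw [mul_assoc, ← hxsplit]
      have h8 : K' * x ^ (1-σ) < 1/σ := by
        have hhalf : K' * x ^ (1-σ) ≤ 1/(2*σ) := by
          have h9 := mul_le_mul_of_nonneg_left hKσx
            (le_of_lt (show (0:ℝ) < 1/σ by positivity))
          calc K' * x ^ (1-σ) = (1/σ) * (K' * σ * x ^ (1-σ)) := by
                field_simp
            _ ≤ (1/σ) * (1/2) := h9
            _ = 1/(2*σ) := by ring
        have h10 : 1/(2*σ) < 1/σ := by
          rw [div_lt_div_iff₀ (by positivity) hσ₀]
          nlinarith
        linarith
      calc K * x ≤ K' * x := hKx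
        _ = (K' * x ^ (1-σ)) * x ^ σ := h7
        _ < (1/σ) * x ^ σ := by nlinarith
    linarith
  -- Part 4 : distributional divergence identity
  have part4 : ∀ φ : ℝ × ℝ → ℝ, ContDiff ℝ (⊤ : ℕ∞) φ → HasCompactSupport φ →
      -∫ p : ℝ × ℝ, a₁ p * (fderiv ℝ φ p (1, 0) + fderiv ℝ φ p (0, 1))
        = ∫ p : ℝ × ℝ, d p * φ p := by
    intro φ hφs hφc
    set ψ : ℝ × ℝ → ℝ := fun p => χ p * φ p with hψdef
    have hψs : ContDiff ℝ (⊤ : ℕ∞) ψ := hχ_smooth.mul hφs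
    have hψc : HasCompactSupport ψ := hχ_supp.mul_right
    have key := key_div G hGc (fun x y u => by simp only [hG]; ring_nf) ψ hψs hψc
    have happ : ∀ L : ℝ × ℝ →L[ℝ] ℝ, L (1, 0) + L (0, 1) = L (1, 1) := by
      intro L
      rw [← L.map_add]
      norm_num
    have hpoint : ∀ p : ℝ × ℝ,
        G p * fderiv ℝ ψ p (1, 1)
          = a₁ p * (fderiv ℝ φ p (1, 0) + fderiv ℝ φ p (0, 1)) + d p * φ p := by
      intro p
      have hψd : fderiv ℝ ψ p = χ p • fderiv ℝ φ p + φ p • fderiv ℝ χ p :=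
        fderiv_mul ((hχ_smooth.differentiable (by simp)) p) ((hφs.differentiable (by simp)) p)
      rw [ha₁', hd', hψd]
      simp only [ContinuousLinearMap.add_apply, ContinuousLinearMap.coe_smul',
        Pi.smul_apply, smul_eq_mul, hη]
      rw [happ (fderiv ℝ φ p), ← happ (fderiv ℝ χ p)]
      ring
    have ha₁cont : Continuous a₁ := by
      rw [ha₁']; exact hGc.mul hχ_smooth.continuous
    have hdcont : Continuous d := by
      rw [hd']; exact hGc.mul hηc
    have hdsupp : HasCompactSupport d := by
      rw [hd']; exact hηsupp.mul_left
    have hφd : Continuous fun p => fderiv ℝ φ p (1, 0) + fderiv ℝ φ p (0, 1) :=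
      ((hφs.continuous_fderiv (by simp)).clm_apply continuous_const).add
        ((hφs.continuous_fderiv (by simp)).clm_apply continuous_const)
    have hi1 : Integrable (fun p : ℝ × ℝ =>
        a₁ p * (fderiv ℝ φ p (1, 0) + fderiv ℝ φ p (0, 1))) :=
      (ha₁cont.mul hφd).integrable_of_hasCompactSupport part2.mul_right
    have hi2 : Integrable (fun p : ℝ × ℝ => d p * φ p) :=
      (hdcont.mul hφs.continuous).integrable_of_hasCompactSupport hdsupp.mul_right
    have hsum : (∫ p : ℝ × ℝ, (a₁ p * (fderiv ℝ φ p (1, 0) + fderiv ℝ φ p (0, 1))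
        + d p * φ p)) = 0 := by
      rw [show (fun p : ℝ × ℝ => a₁ p * (fderiv ℝ φ p (1, 0) + fderiv ℝ φ p (0, 1)) + d p * φ p)
          = fun p => G p * fderiv ℝ ψ p (1, 1) from funext fun p => (hpoint p).symm]
      exact key
    rw [integral_add hi1 hi2] at hsum
    linarith
  -- Part 5 : d is Hölder and bounded
  have part5 : ∃ C' > (0:ℝ), (∀ p q : ℝ × ℝ, |d p - d q| ≤ C' * ‖p - q‖ ^ σ)
      ∧ ∀ p, |d p| ≤ C' := by
    have hh := holder_mul_aux σ hσ₀ hσ1' G η (2/σ) (2*Lf) Bη M (by positivity) hBη0 hM0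
      (by positivity) hGh hηLip hηB hgMη
    refine ⟨(2/σ) * Bη + M * (2*Lf) + 2 * M * Bη + 1, by positivity, fun p q => ?_, ?_⟩
    · rw [hd']
      refine (hh p q).trans ?_
      have : (0:ℝ) ≤ ‖p - q‖ ^ σ := Real.rpow_nonneg (norm_nonneg _) σ
      nlinarith
    · intro p
      rw [hd']
      by_cases hp : η p = 0
      · simp only [hp, mul_zero, abs_zero]
        positivity
      · simp only [abs_mul]
        have h1 := mul_le_mul (hgMη p hp) (hηB p) (abs_nonneg _) hM0
        nlinarith [mul_nonneg hM0 hBη0, mul_nonneg (by positivity : (0:ℝ) ≤ 2/σ) hBη0,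
          mul_nonneg hM0 (by positivity : (0:ℝ) ≤ 2*(Lf:ℝ))]
  exact ⟨part1, part2, part3, part4, part5⟩
end
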